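/- arXiv:2304.14578 — 8 statements merged into one kernel-verified Lean document; each statement's English description precedes it below -/
import Mathlib

section
/- Consider the discrete-time stochastic system x_{k+1} = f(x_k, d_k) with disturbances d_k drawn i.i.d. from a distribution D on ℝ^m, and suppose V : ℝⁿ → ℝ_{≥0} satisfies the expected drift condition E_{d∼D}[V(f(x,d))] ≤ (1−α)V(x) + φ for all x ∈ ℝⁿ, where α ∈ (0,1) and φ ≥ 0. Fix K ∈ ℕ, let θ = 1/(1−α), and define the process W_k = θ^k V(x_k) − φ Σ_{i=1}^{k} θ^i + φ Σ_{i=1}^{K} θ^i for k = 0, 1, …, K, where (x_k) is the trajectory generated from a fixed initial state x₀ by the i.i.d. disturbances. Then (W_k)_{k=0}^{K} is a nonnegative supermartingale with respect to the natural filtration generated by the state trajectory: W_k ≥ 0 and E[W_{k+1} | x_{0:k}] ≤ W_k almost surely for all k < K. -/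
open MeasureTheory ProbabilityTheory Filter Set

/-!
Given the first `k` disturbances, `x (k + 1) = f (x k) (d k)` where `d k` is independent of them
with law `μ`, so
`E[V (x (k + 1)) | d 0, …, d (k - 1)] = ∫ V (f (x k) v) dμ(v) ≤ (1 - α) V (x k) + φ`
(and, by the same computation under Tonelli, every `V (x k)` is integrable). The natural filtration
of `x` is coarser, so by the tower property the bound survives conditioning on it, and since
`θ ^ (k + 1) (1 - α) = θ ^ k`, the increasing affine map defining `W (k + 1)` from `V (x (k + 1))`
turns it into `E[W (k + 1) | x 0, …, x k] ≤ W k`. Nonnegativity holds because the partial sums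
`∑_{i=1}^k θ ^ i` increase with `k`.
-/

namespace MeasureTheory

variable {α : Type*} {m₀ : MeasurableSpace α} {μ : Measure α} [IsFiniteMeasure μ] {Y Z : α → ℝ}

lemma condExp_le_of_condExp_le_of_le {m₁ m₂ : MeasurableSpace α} (h₁₂ : m₁ ≤ m₂) (h₂ : m₂ ≤ m₀)
    (hZ : StronglyMeasurable[m₁] Z) (hZi : Integrable Z μ) (h : μ[Y | m₂] ≤ᵐ[μ] Z) :
    μ[Y | m₁] ≤ᵐ[μ] Z :=
  calc μ[Y | m₁] =ᵐ[μ] μ[μ[Y | m₂] | m₁] := (condExp_condExp_of_le h₁₂ h₂).symm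
    _ ≤ᵐ[μ] μ[Z | m₁] := condExp_mono integrable_condExp hZi h
    _ = Z := condExp_of_stronglyMeasurable (h₁₂.trans h₂) hZ hZi

lemma condExp_const_mul_add_const_le {m : MeasurableSpace α} (hm : m ≤ m₀) (hY : Integrable Y μ)
    {t : ℝ} (ht : 0 ≤ t) (c : ℝ) (h : μ[Y | m] ≤ᵐ[μ] Z) :
    μ[fun ω => t * Y ω + c | m] ≤ᵐ[μ] fun ω => t * Z ω + c := by
  have hadd : μ[fun ω => t * Y ω + c | m] =ᵐ[μ] μ[fun ω => t * Y ω | m] + μ[fun _ => c | m] :=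
    condExp_add (hY.const_mul t) (integrable_const c) m
  filter_upwards [hadd, condExp_smul (μ := μ) t Y m, h] with ω hω hsmul hY
  rw [hω, condExp_const hm]
  change μ[t • Y | m] ω + c ≤ _
  rw [hsmul, Pi.smul_apply, smul_eq_mul]
  gcongr

end MeasureTheory

namespace ProbabilityTheory

section Independence

variable {Ω β γ : Type*} {mΩ : MeasurableSpace Ω} {mβ : MeasurableSpace β}
  {mγ : MeasurableSpace γ} {μ : Measure Ω} {X : Ω → β} {Y : Ω → γ}

lemma IndepFun.condDistrib_ae_eq_const [IsFiniteMeasure μ] [StandardBorelSpace γ] [Nonempty γ]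
    (hXY : IndepFun X Y μ) (hX : Measurable X) (hY : Measurable Y) :
    condDistrib Y X μ =ᵐ[μ.map X] Kernel.const β (μ.map Y) := by
  rw [condDistrib_ae_eq_iff_measure_eq_compProd X hY.aemeasurable, Measure.compProd_const]
  exact (indepFun_iff_map_prod_eq_prod_map_map hX.aemeasurable hY.aemeasurable).mp hXY

lemma IndepFun.condExp_comp_prodMk_ae_eq [IsFiniteMeasure μ] [StandardBorelSpace γ] [Nonempty γ]
    (hXY : IndepFun X Y μ) (hX : Measurable X) (hY : Measurable Y) {g : β × γ → ℝ}
    (hg : StronglyMeasurable g) (hgi : Integrable (fun ω => g (X ω, Y ω)) μ) :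
    μ[fun ω => g (X ω, Y ω) | mβ.comap X] =ᵐ[μ] fun ω => ∫ c, g (X ω, c) ∂(μ.map Y) := by
  filter_upwards [condExp_prod_ae_eq_integral_condDistrib hX hY.aemeasurable hg hgi,
    ae_of_ae_map hX.aemeasurable (hXY.condDistrib_ae_eq_const hX hY)] with ω hω hκ
  rw [hω, hκ, Kernel.const_apply]

lemma IndepFun.integrable_comp_prodMk_of_integral_le [IsFiniteMeasure μ] (hXY : IndepFun X Y μ)
    (hX : Measurable X) (hY : Measurable Y) {g : β × γ → ℝ} (hg : StronglyMeasurable g)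
    (hg₀ : 0 ≤ g) {h : β → ℝ} (hh : Integrable h (μ.map X))
    (hgi : ∀ b, Integrable (fun c => g (b, c)) (μ.map Y))
    (hgh : ∀ b, ∫ c, g (b, c) ∂(μ.map Y) ≤ h b) :
    Integrable (fun ω => g (X ω, Y ω)) μ := by
  have hmap : μ.map (fun ω => (X ω, Y ω)) = (μ.map X).prod (μ.map Y) :=
    (indepFun_iff_map_prod_eq_prod_map_map hX.aemeasurable hY.aemeasurable).mp hXY
  have hprod : Integrable g ((μ.map X).prod (μ.map Y)) := by
    refine (integrable_prod_iff hg.aestronglyMeasurable).mpr ⟨.of_forall hgi, hh.mono'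
      hg.norm.integral_prod_right'.aestronglyMeasurable (.of_forall fun b => ?_)⟩
    simp only [Real.norm_eq_abs, abs_of_nonneg (hg₀ _)]
    rw [abs_of_nonneg (integral_nonneg fun c => hg₀ (b, c))]
    exact hgh b
  rw [← hmap] at hprod
  exact (integrable_map_measure hprod.1 (hX.prodMk hY).aemeasurable).mp hprod

lemma iIndepFun.indepFun_fin_prefix {E : Type*} [MeasurableSpace E] {d : ℕ → Ω → E}
    (hd : ∀ k, Measurable (d k)) (hindep : iIndepFun d μ) (k : ℕ) :
    IndepFun (fun ω (i : Fin k) => d i ω) (d k) μ := by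
  have h := hindep.indepFun_finset (Finset.range k) {k} (by simp) hd
  exact h.comp (measurable_pi_lambda _ fun i : Fin k => measurable_pi_apply
    ⟨(i : ℕ), Finset.mem_range.mpr i.isLt⟩) (measurable_pi_apply ⟨k, Finset.mem_singleton_self k⟩)

end Independence

end ProbabilityTheory

section Trajectory

variable {Ω X E : Type*} {f : X → E → X} {x₀ : X}

def trajectory (f : X → E → X) (x₀ : X) : (k : ℕ) → (Fin k → E) → X
  | 0, _ => x₀
  | k + 1, v => f (trajectory f x₀ k fun j => v j.castSucc) (v (Fin.last k))

lemma measurable_trajectory [MeasurableSpace X] [MeasurableSpace E]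
    (hf : Measurable (Function.uncurry f)) (k : ℕ) :
    Measurable (trajectory f x₀ k) := by
  induction k with
  | zero => exact measurable_const
  | succ k ih =>
    exact hf.comp ((ih.comp (measurable_pi_lambda _ fun j => measurable_pi_apply _)).prodMk
      (measurable_pi_apply _))

lemma eq_trajectory {d : ℕ → Ω → E} {x : ℕ → Ω → X} (hx0 : ∀ ω, x 0 ω = x₀)
    (hxstep : ∀ k ω, x (k + 1) ω = f (x k ω) (d k ω)) (k : ℕ) (ω : Ω) :
    x k ω = trajectory f x₀ k fun i => d i ω := by
  induction k with
  | zero => exact hx0 ω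
  | succ k ih => rw [hxstep, ih]; rfl

end Trajectory

section DriftCondition

variable {Ω X E : Type*} {mΩ : MeasurableSpace Ω} [MeasurableSpace X] [MeasurableSpace E]
  {P : Measure Ω} [IsProbabilityMeasure P] {μ : Measure E} {f : X → E → X} {V : X → ℝ}
  {a b : ℝ} {x₀ : X} {d : ℕ → Ω → E} {x : ℕ → Ω → X}

lemma integrable_comp_of_drift (hf : Measurable (Function.uncurry f)) (hV : Measurable V)
    (hV₀ : ∀ y, 0 ≤ V y) (hVint : ∀ y, Integrable (fun v => V (f y v)) μ)
    (hdrift : ∀ y, ∫ v, V (f y v) ∂μ ≤ a * V y + b) (hd : ∀ k, Measurable (d k))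
    (hindep : iIndepFun d P) (hdist : ∀ k, P.map (d k) = μ) (hx0 : ∀ ω, x 0 ω = x₀)
    (hxstep : ∀ k ω, x (k + 1) ω = f (x k ω) (d k ω)) (k : ℕ) :
    Integrable (fun ω => V (x k ω)) P := by
  induction k with
  | zero => simpa only [hx0] using integrable_const (V x₀)
  | succ k ih =>
    have hprefix : Measurable fun ω (i : Fin k) => d i ω := measurable_pi_lambda _ fun i => hd i
    have htraj := measurable_trajectory (x₀ := x₀) hf k
    have hh : Integrable (fun u => a * V (trajectory f x₀ k u) + b)
        (P.map fun ω (i : Fin k) => d i ω) := by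
      refine (integrable_map_measure ?_ hprefix.aemeasurable).mpr ?_
      · exact (((hV.comp htraj).const_mul a).add_const b).aestronglyMeasurable
      refine ((ih.const_mul a).add (integrable_const b)).congr (.of_forall fun ω => ?_)
      simp only [Pi.add_apply, Function.comp_apply, eq_trajectory hx0 hxstep k ω]
    simp only [hxstep, eq_trajectory hx0 hxstep k]
    refine (hindep.indepFun_fin_prefix hd k).integrable_comp_prodMk_of_integral_le
      (g := fun p => V (f (trajectory f x₀ k p.1) p.2)) hprefix (hd k)
      (hV.comp (hf.comp (htraj.prodMap measurable_id))).stronglyMeasurable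
      (fun p => hV₀ _) hh (fun u => ?_) (fun u => ?_)
    · simpa only [hdist] using hVint (trajectory f x₀ k u)
    · simpa only [hdist] using hdrift (trajectory f x₀ k u)

lemma condExp_comap_fin_prefix_le_of_drift [StandardBorelSpace E] [Nonempty E]
    (hf : Measurable (Function.uncurry f)) (hV : Measurable V)
    (hdrift : ∀ y, ∫ v, V (f y v) ∂μ ≤ a * V y + b) (hd : ∀ k, Measurable (d k))
    (hindep : iIndepFun d P) (hdist : ∀ k, P.map (d k) = μ) (hx0 : ∀ ω, x 0 ω = x₀)
    (hxstep : ∀ k ω, x (k + 1) ω = f (x k ω) (d k ω)) {k : ℕ}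
    (hint : Integrable (fun ω => V (x (k + 1) ω)) P) :
    P[fun ω => V (x (k + 1) ω) | MeasurableSpace.comap (fun ω (i : Fin k) => d i ω) inferInstance]
      ≤ᵐ[P] fun ω => a * V (x k ω) + b := by
  have hstep : (fun ω => V (x (k + 1) ω)) =
      fun ω => V (f (trajectory f x₀ k fun i => d i ω) (d k ω)) := by
    simp only [hxstep, eq_trajectory hx0 hxstep k]
  rw [hstep] at hint ⊢
  filter_upwards [(hindep.indepFun_fin_prefix hd k).condExp_comp_prodMk_ae_eq
    (g := fun p => V (f (trajectory f x₀ k p.1) p.2)) (measurable_pi_lambda _ fun i => hd i)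
    (hd k)
    (hV.comp (hf.comp ((measurable_trajectory hf k).prodMap measurable_id))).stronglyMeasurable
    hint] with ω hω
  rw [hω, hdist, eq_trajectory hx0 hxstep k ω]
  exact hdrift _

end DriftCondition

section NaturalFiltration

variable {Ω X E : Type*} {mΩ : MeasurableSpace Ω} [TopologicalSpace X]
  [TopologicalSpace.MetrizableSpace X] [MeasurableSpace X] [BorelSpace X] [MeasurableSpace E]
  {f : X → E → X} {x₀ : X} {d : ℕ → Ω → E} {x : ℕ → Ω → X}

lemma natural_le_comap_fin_prefix (hf : Measurable (Function.uncurry f))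
    (hx0 : ∀ ω, x 0 ω = x₀) (hxstep : ∀ k ω, x (k + 1) ω = f (x k ω) (d k ω))
    (hxmeas : ∀ k, StronglyMeasurable (x k)) (k : ℕ) :
    Filtration.natural x hxmeas k ≤
      MeasurableSpace.comap (fun ω (i : Fin k) => d i ω) inferInstance := by
  refine iSup₂_le fun j hjk => ?_
  have hxj : x j = (fun u : Fin k → E => trajectory f x₀ j fun i => u (Fin.castLE hjk i)) ∘
      fun ω i => d i ω :=
    funext fun ω => eq_trajectory hx0 hxstep j ω
  rw [hxj, ← MeasurableSpace.comap_comp]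
  exact MeasurableSpace.comap_mono ((measurable_trajectory hf j).comp
    (measurable_pi_lambda _ fun i => measurable_pi_apply _)).comap_le

lemma condExp_natural_le_of_drift [StandardBorelSpace E] [Nonempty E] {P : Measure Ω}
    [IsProbabilityMeasure P] {μ : Measure E} {V : X → ℝ} {a b : ℝ}
    (hf : Measurable (Function.uncurry f)) (hV : Measurable V)
    (hdrift : ∀ y, ∫ v, V (f y v) ∂μ ≤ a * V y + b) (hd : ∀ k, Measurable (d k))
    (hindep : iIndepFun d P) (hdist : ∀ k, P.map (d k) = μ) (hx0 : ∀ ω, x 0 ω = x₀)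
    (hxstep : ∀ k ω, x (k + 1) ω = f (x k ω) (d k ω)) (hxmeas : ∀ k, StronglyMeasurable (x k))
    {k : ℕ} (hint : Integrable (fun ω => V (x k ω)) P)
    (hint_succ : Integrable (fun ω => V (x (k + 1) ω)) P) :
    P[fun ω => V (x (k + 1) ω) | Filtration.natural x hxmeas k]
      ≤ᵐ[P] fun ω => a * V (x k ω) + b :=
  condExp_le_of_condExp_le_of_le (natural_le_comap_fin_prefix hf hx0 hxstep hxmeas k)
    (measurable_pi_lambda (fun ω (i : Fin k) => d i ω) fun i => hd i).comap_le
    (((hV.comp (Filtration.stronglyAdapted_natural hxmeas k).measurable).const_mul a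
      |>.add_const b).stronglyMeasurable)
    ((hint.const_mul a).add (integrable_const b))
    (condExp_comap_fin_prefix_le_of_drift hf hV hdrift hd hindep hdist hx0 hxstep hint_succ)

end NaturalFiltration

/-- **Supermartingale construction.** For the system `x_{k+1} = f(x_k, d_k)` with `d_k` i.i.d.
from `μ`, if the nonnegative function `V` satisfies the expected drift condition
`E_d[V(f(x,d))] ≤ (1-α) V(x) + φ` for all `x`, then with `θ = 1/(1-α)` the process
`W_k = θ^k V(x_k) - φ ∑_{i=1}^k θ^i + φ ∑_{i=1}^K θ^i` is (on the horizon `0,…,K`) a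
nonnegative supermartingale with respect to the natural filtration of the state process:
it is adapted, integrable, `W_k ≥ 0`, and `E[W_{k+1} | x_{0:k}] ≤ W_k` a.s. for `k < K`. -/
theorem supermartingale_construction {n m : ℕ}
    (f : EuclideanSpace ℝ (Fin n) → EuclideanSpace ℝ (Fin m) → EuclideanSpace ℝ (Fin n))
    (hf : Continuous (Function.uncurry f))
    (μ : Measure (EuclideanSpace ℝ (Fin m))) [IsProbabilityMeasure μ]
    (V : EuclideanSpace ℝ (Fin n) → ℝ) (hVmeas : Measurable V) (hVnonneg : ∀ x, 0 ≤ V x)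
    (α φ : ℝ) (hα : α ∈ Set.Ioo (0 : ℝ) 1) (hφ : 0 ≤ φ)
    (hVint : ∀ x, Integrable (fun v => V (f x v)) μ)
    (hdrift : ∀ x, (∫ v, V (f x v) ∂μ) ≤ (1 - α) * V x + φ)
    (K : ℕ) (x₀ : EuclideanSpace ℝ (Fin n))
    {Ω : Type*} {mΩ : MeasurableSpace Ω} (P : Measure Ω) [IsProbabilityMeasure P]
    (d : ℕ → Ω → EuclideanSpace ℝ (Fin m)) (hdmeas : ∀ k, Measurable (d k))
    (hindep : iIndepFun d P)
    (hdist : ∀ k, Measure.map (d k) P = μ)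
    (x : ℕ → Ω → EuclideanSpace ℝ (Fin n))
    (hx0 : ∀ ω, x 0 ω = x₀)
    (hxstep : ∀ k ω, x (k + 1) ω = f (x k ω) (d k ω))
    (hxmeas : ∀ k, StronglyMeasurable (x k))
    (θ : ℝ) (hθ : θ = (1 - α)⁻¹)
    (W : ℕ → Ω → ℝ)
    (hW : ∀ k ω, W k ω =
      θ ^ k * V (x k ω) - φ * ∑ i ∈ Finset.Icc 1 k, θ ^ i + φ * ∑ i ∈ Finset.Icc 1 K, θ ^ i) :
    (∀ k ≤ K, ∀ ω, 0 ≤ W k ω) ∧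
    (∀ k ≤ K, StronglyMeasurable[(Filtration.natural x hxmeas) k] (W k)) ∧
    (∀ k ≤ K, Integrable (W k) P) ∧
    (∀ k < K, P[W (k + 1) | (Filtration.natural x hxmeas) k] ≤ᵐ[P] W k) := by
  obtain ⟨-, hα1⟩ := hα
  have hθ₀ : 0 < θ := hθ ▸ inv_pos.2 (sub_pos.2 hα1)
  have hθα : θ * (1 - α) = 1 := hθ ▸ inv_mul_cancel₀ (sub_pos.2 hα1).ne'
  have hVx := integrable_comp_of_drift hf.measurable hVmeas hVnonneg hVint hdrift hdmeas hindep
    hdist hx0 hxstep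
  have hWeq : ∀ k, W k = fun ω => θ ^ k * V (x k ω) +
      (φ * ∑ i ∈ Finset.Icc 1 K, θ ^ i - φ * ∑ i ∈ Finset.Icc 1 k, θ ^ i) :=
    fun k => funext fun ω => by rw [hW]; ring
  refine ⟨fun k hk ω => ?_, fun k _ => ?_, fun k _ => ?_, fun k hk => ?_⟩
  · have hsum : ∑ i ∈ Finset.Icc 1 k, θ ^ i ≤ ∑ i ∈ Finset.Icc 1 K, θ ^ i :=
      Finset.sum_le_sum_of_subset_of_nonneg (Finset.Icc_subset_Icc_right hk)
        fun i _ _ => by positivity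
    rw [hW]
    nlinarith [mul_nonneg (pow_pos hθ₀ k).le (hVnonneg (x k ω))]
  · rw [hWeq]
    exact ((hVmeas.comp (Filtration.stronglyAdapted_natural hxmeas k).measurable).const_mul _
      |>.add_const _).stronglyMeasurable
  · rw [hWeq]
    exact ((hVx k).const_mul _).add (integrable_const _)
  · rw [hWeq]
    refine (condExp_const_mul_add_const_le ((Filtration.natural x hxmeas).le k) (hVx (k + 1))
      (pow_pos hθ₀ (k + 1)).le _ (condExp_natural_le_of_drift hf.measurable hVmeas hdrift hdmeas
        hindep hdist hx0 hxstep hxmeas (hVx k) (hVx (k + 1)))).trans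
      (.of_forall fun ω => le_of_eq ?_)
    rw [hW, Finset.sum_Icc_succ_top (by omega), pow_succ]
    linear_combination (θ ^ k * V (x k ω)) * hθα
end

section
/- Consider the discrete-time stochastic system x_{k+1} = f(x_k, d_k) with disturbances d_k drawn i.i.d. from a distribution D on ℝ^m, and suppose V : ℝⁿ → ℝ_{≥0} satisfies E_{d∼D}[V(f(x,d))] ≤ (1−α)V(x) + φ for all x ∈ ℝⁿ, where α ∈ (0,1) and φ ≥ 0. Fix K ∈ ℕ, an initial state x₀, and λ > 0, and define ρ_k = (λ − θ^{K+1}φ/(θ−1)) θ^{−k} + θφ/(θ−1) with θ = 1/(1−α). Then P{ V(x_k) ≤ ρ_k for all k ≤ K } ≥ 1 − (V(x₀) + (φ/α)((1−α)^{−K} − 1)) / λ, where the probability is over the i.i.d. disturbance sequence and x_k is the trajectory generated from x₀. -/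
/-!
With `θ = (1 - α)⁻¹` and `c k = φ ∑_{i=k+1}^{K} θ^i`, the drift condition says exactly that
`W k = θ^k V(x k) + c k` is a nonnegative supermartingale on `[0, K]` for the filtration
generated by the past disturbances: `d k` is independent of that past, so integrating out `d k`
turns `θ^(k+1) V(x (k+1)) + c (k+1)` into at most `θ^(k+1) ((1 - α) V(x k) + φ) + c (k+1) = W k`.
The event `V(x k) ≤ ρ k` is `W k ≤ λ`, and `W 0 = V x₀ + (φ/α)((1 - α)^(-K) - 1)`, so Ville's
inequality `λ P(max_{k ≤ K} W k > λ) ≤ E[W 0]` gives the bound. Working with `ℝ≥0∞`-valued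
lower integrals throughout avoids any integrability bookkeeping for `W`.
-/

open MeasureTheory ProbabilityTheory Filter Set
open scoped ENNReal

namespace MeasureTheory

variable {Ω : Type*} {m mΩ : MeasurableSpace Ω} {P : Measure Ω}

theorem mul_measure_inter_lt_add_setLIntegral_diff_le (s : Set Ω) {W : Ω → ℝ≥0∞}
    (hW : Measurable W) (c : ℝ≥0∞) :
    c * P (s ∩ {ω | c < W ω}) + ∫⁻ ω in s \ {ω | c < W ω}, W ω ∂P ≤
      ∫⁻ ω in s, W ω ∂P := by
  have hmarkov : c * P (s ∩ {ω | c < W ω}) ≤ ∫⁻ ω in s ∩ {ω | c < W ω}, W ω ∂P := by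
    rw [← setLIntegral_const]
    exact setLIntegral_mono hW fun ω hω => hω.2.le
  calc _ ≤ ∫⁻ ω in s ∩ {ω | c < W ω}, W ω ∂P + ∫⁻ ω in s \ {ω | c < W ω}, W ω ∂P := by
        gcongr
    _ = ∫⁻ ω in s, W ω ∂P :=
        lintegral_inter_add_sdiff W s (measurableSet_lt measurable_const hW)

/-- Ville's inequality, with the supermartingale property of `W` in its set-integral form. -/
theorem mul_measure_exists_lt_le_lintegral (ℱ : Filtration ℕ mΩ) {W : ℕ → Ω → ℝ≥0∞}
    (hW : ∀ k, Measurable[ℱ k] (W k)) {K : ℕ}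
    (hsuper : ∀ k < K, ∀ s, MeasurableSet[ℱ k] s →
      ∫⁻ ω in s, W (k + 1) ω ∂P ≤ ∫⁻ ω in s, W k ω ∂P) (c : ℝ≥0∞) :
    c * P {ω | ∃ k ≤ K, c < W k ω} ≤ ∫⁻ ω, W 0 ω ∂P := by
  have hmeas : ∀ j, MeasurableSet[ℱ j] {ω | ∃ k ≤ j, c < W k ω} := by
    intro j
    have : {ω | ∃ k ≤ j, c < W k ω} = ⋃ k ∈ Iic j, W k ⁻¹' Ioi c := by ext ω; simp
    rw [this]
    exact .biUnion (to_countable _) fun k hk =>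
      (hW k).mono (ℱ.mono hk) le_rfl measurableSet_Ioi
  suffices ∀ j ≤ K, c * P {ω | ∃ k ≤ j, c < W k ω} +
      ∫⁻ ω in {ω | ∃ k ≤ j, c < W k ω}ᶜ, W j ω ∂P ≤ ∫⁻ ω, W 0 ω ∂P from
    le_trans le_self_add (this K le_rfl)
  intro j hj
  induction j with
  | zero =>
    simpa [compl_eq_univ_sdiff] using
      mul_measure_inter_lt_add_setLIntegral_diff_le (P := P) univ ((hW 0).mono (ℱ.le 0) le_rfl) c
  | succ j ih =>
    set E := {ω | ∃ k ≤ j, c < W k ω}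
    have hsplit : {ω | ∃ k ≤ j + 1, c < W k ω} = E ∪ (Eᶜ ∩ {ω | c < W (j + 1) ω}) := by
      ext ω
      simp only [mem_ofPred_eq, mem_union, mem_inter_iff, mem_compl_iff, Nat.le_succ_iff,
        or_and_right, exists_or, exists_eq_left, Nat.succ_eq_add_one, E]
      grind
    have hsplitc : {ω | ∃ k ≤ j + 1, c < W k ω}ᶜ = Eᶜ \ {ω | c < W (j + 1) ω} := by
      ext ω
      simp only [mem_ofPred_eq, Set.mem_sdiff, mem_compl_iff, Nat.le_succ_iff, or_and_right,
        exists_or, exists_eq_left, Nat.succ_eq_add_one, E]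
      grind
    calc _ ≤ c * P E + (c * P (Eᶜ ∩ {ω | c < W (j + 1) ω}) +
          ∫⁻ ω in Eᶜ \ {ω | c < W (j + 1) ω}, W (j + 1) ω ∂P) := by
          rw [hsplitc, ← add_assoc, ← mul_add]
          gcongr
          rw [hsplit]
          exact measure_union_le _ _
      _ ≤ c * P E + ∫⁻ ω in Eᶜ, W (j + 1) ω ∂P := by
          gcongr
          exact mul_measure_inter_lt_add_setLIntegral_diff_le _ ((hW _).mono (ℱ.le _) le_rfl) c
      _ ≤ c * P E + ∫⁻ ω in Eᶜ, W j ω ∂P :=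
          add_le_add le_rfl (hsuper j hj _ (hmeas j).compl)
      _ ≤ ∫⁻ ω, W 0 ω ∂P := ih (by omega)

section Noise

variable {β γ E : Type*} [MeasurableSpace β] [MeasurableSpace γ] [MeasurableSpace E]

/-- Unlike `Filtration.natural`, time `k` sees only `d 0, …, d (k - 1)`, so `d k` can be
independent of it. -/
def Filtration.strictNatural (d : ℕ → Ω → β) (hd : ∀ k, Measurable (d k)) :
    Filtration ℕ mΩ where
  seq k := ⨆ i < k, MeasurableSpace.comap (d i) ‹_›
  mono' _ _ hjk := iSup₂_mono' fun i hi => ⟨i, hi.trans_le hjk, le_rfl⟩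
  le' _ := iSup₂_le fun i _ => (hd i).comap_le

variable {d : ℕ → Ω → β} {hd : ∀ k, Measurable (d k)}

theorem Filtration.measurable_strictNatural_succ (k : ℕ) :
    Measurable[Filtration.strictNatural d hd (k + 1)] (d k) :=
  Measurable.of_comap_le (le_iSup₂_of_le k (Nat.lt_succ_self k) le_rfl)

theorem Filtration.indep_strictNatural (hind : iIndepFun d P) (k : ℕ) :
    Indep (Filtration.strictNatural d hd k) (MeasurableSpace.comap (d k) ‹_›) P := by
  have := indep_iSup_of_disjoint (fun i => (hd i).comap_le) hind.iIndep
    (S := {i | i < k}) (T := {k}) (by simp)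
  simp only [mem_ofPred_eq, mem_singleton_iff, iSup_iSup_eq_left] at this
  exact this

theorem Filtration.measurable_strictNatural_of_step {x : ℕ → Ω → E} {f : E → β → E}
    (hf : Measurable (Function.uncurry f)) (x₀ : E) (hx0 : ∀ ω, x 0 ω = x₀)
    (hstep : ∀ k ω, x (k + 1) ω = f (x k ω) (d k ω)) :
    ∀ k, Measurable[Filtration.strictNatural d hd k] (x k)
  | 0 => by simp only [funext hx0]; exact measurable_const
  | k + 1 => by
    rw [funext (hstep k)]
    exact hf.comp (((measurable_strictNatural_of_step hf x₀ hx0 hstep k).mono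
      ((Filtration.strictNatural d hd).mono k.le_succ) le_rfl).prodMk
      (measurable_strictNatural_succ k))

theorem _root_.ProbabilityTheory.IndepFun.lintegral_comp_eq_lintegral_lintegral
    [IsFiniteMeasure P] {Y : Ω → γ} {D : Ω → β}
    (hind : IndepFun Y D P) (hY : Measurable Y) (hD : Measurable D) {g : γ × β → ℝ≥0∞}
    (hg : Measurable g) :
    ∫⁻ ω, g (Y ω, D ω) ∂P = ∫⁻ ω, ∫⁻ v, g (Y ω, v) ∂(P.map D) ∂P := by
  rw [← lintegral_map hg (hY.prodMk hD),
    hind.map_prod_eq_prod_map_map hY.aemeasurable hD.aemeasurable,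
    lintegral_prod _ hg.aemeasurable, lintegral_map hg.lintegral_prod_right' hY]

theorem setLIntegral_comp_le_of_indep [IsFiniteMeasure P] (hm : m ≤ mΩ)
    {X : Ω → E} (hX : Measurable[m] X) {D : Ω → β} (hD : Measurable D)
    (hind : Indep m (MeasurableSpace.comap D ‹_›) P) {f : E → β → E}
    (hf : Measurable (Function.uncurry f)) {g g' : E → ℝ≥0∞} (hg' : Measurable g')
    (hdrift : ∀ y, ∫⁻ v, g' (f y v) ∂(P.map D) ≤ g y) {s : Set Ω} (hs : MeasurableSet[m] s) :
    ∫⁻ ω in s, g' (f (X ω) (D ω)) ∂P ≤ ∫⁻ ω in s, g (X ω) ∂P := by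
  -- The indicator of `s` rides along with `X` so that Fubini applies to the independent pair.
  set Y : Ω → ℝ≥0∞ × E := fun ω => (s.indicator 1 ω, X ω)
  have hY : Measurable[m] Y := (measurable_const.indicator hs).prodMk hX
  have hYD : IndepFun Y D P :=
    (IndepFun_iff_Indep _ _ _).2 (indep_of_indep_of_le_left hind hY.comap_le)
  have hmul (F : Ω → ℝ≥0∞) : ∫⁻ ω in s, F ω ∂P = ∫⁻ ω, s.indicator 1 ω * F ω ∂P := by
    rw [← lintegral_indicator (hm _ hs)]
    congr 1 with ω
    by_cases hω : ω ∈ s <;> simp [hω]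
  calc ∫⁻ ω in s, g' (f (X ω) (D ω)) ∂P
      = ∫⁻ ω, (Y ω).1 * g' (f (Y ω).2 (D ω)) ∂P := hmul _
    _ = ∫⁻ ω, ∫⁻ v, (Y ω).1 * g' (f (Y ω).2 v) ∂(P.map D) ∂P :=
        hYD.lintegral_comp_eq_lintegral_lintegral (hY.mono hm le_rfl) hD
          (g := fun p => p.1.1 * g' (f p.1.2 p.2))
          (measurable_fst.fst.mul
            (hg'.comp (hf.comp (measurable_fst.snd.prodMk measurable_snd))))
    _ ≤ ∫⁻ ω, s.indicator 1 ω * g (X ω) ∂P := by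
        refine lintegral_mono fun ω => ?_
        rw [lintegral_const_mul' _ _ (by by_cases hω : ω ∈ s <;> simp [Y, hω])]
        exact mul_le_mul_right (hdrift _) _
    _ = ∫⁻ ω in s, g (X ω) ∂P := (hmul _).symm

theorem _root_.ProbabilityTheory.iIndepFun.mul_measure_exists_lt_comp_le
    [IsProbabilityMeasure P] (hind : iIndepFun d P) (hd : ∀ k, Measurable (d k))
    {x : ℕ → Ω → E} {f : E → β → E} (hf : Measurable (Function.uncurry f)) {x₀ : E}
    (hx0 : ∀ ω, x 0 ω = x₀) (hstep : ∀ k ω, x (k + 1) ω = f (x k ω) (d k ω))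
    {g : ℕ → E → ℝ≥0∞} (hg : ∀ k, Measurable (g k)) {K : ℕ}
    (hdrift : ∀ k < K, ∀ y, ∫⁻ v, g (k + 1) (f y v) ∂(P.map (d k)) ≤ g k y) (c : ℝ≥0∞) :
    c * P {ω | ∃ k ≤ K, c < g k (x k ω)} ≤ g 0 x₀ := by
  set ℱ := Filtration.strictNatural d hd
  have hx := Filtration.measurable_strictNatural_of_step hf x₀ hx0 hstep (hd := hd)
  have hsuper : ∀ k < K, ∀ s, MeasurableSet[ℱ k] s →
      ∫⁻ ω in s, g (k + 1) (x (k + 1) ω) ∂P ≤ ∫⁻ ω in s, g k (x k ω) ∂P := by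
    intro k hk s hs
    simpa only [hstep] using setLIntegral_comp_le_of_indep (ℱ.le k) (hx k) (hd k)
      (Filtration.indep_strictNatural hind k) hf (hg (k + 1)) (hdrift k hk) hs
  simpa [hx0] using
    mul_measure_exists_lt_le_lintegral ℱ (fun k => (hg k).comp (hx k)) hsuper c

end Noise

theorem lintegral_ofReal_mul_add_le {μ : Measure Ω} [IsProbabilityMeasure μ] {h : Ω → ℝ}
    (h0 : 0 ≤ h) (hint : Integrable h μ) {B a b : ℝ} (hB : ∫ ω, h ω ∂μ ≤ B) (ha : 0 ≤ a)
    (hb : 0 ≤ b) :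
    ∫⁻ ω, ENNReal.ofReal (a * h ω + b) ∂μ ≤ ENNReal.ofReal (a * B + b) := by
  have hint' : Integrable (fun ω => a * h ω + b) μ := (hint.const_mul a).add (integrable_const b)
  rw [← ofReal_integral_eq_lintegral_ofReal hint'
    (.of_forall fun ω => add_nonneg (mul_nonneg ha (h0 ω)) hb)]
  refine ENNReal.ofReal_le_ofReal ?_
  rw [integral_add (hint.const_mul a) (integrable_const b), integral_const_mul, integral_const,
    probReal_univ, one_smul]
  gcongr

theorem ofReal_one_sub_div_le_measure_compl [IsProbabilityMeasure P] {s : Set Ω} {lam M : ℝ}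
    (hlam : 0 < lam) (hM : 0 ≤ M) (h : ENNReal.ofReal lam * P s ≤ ENNReal.ofReal M) :
    ENNReal.ofReal (1 - M / lam) ≤ P sᶜ := by
  have hs : P s ≤ ENNReal.ofReal (M / lam) := by
    rw [ENNReal.ofReal_div_of_pos hlam, ENNReal.le_div_iff_mul_le (by simp [hlam]) (by simp),
      mul_comm]
    exact h
  rw [ENNReal.ofReal_sub _ (by positivity), ENNReal.ofReal_one, tsub_le_iff_right]
  calc (1 : ℝ≥0∞) = P univ := measure_univ.symm
    _ ≤ P s + P sᶜ := measure_univ_le_add_compl s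
    _ ≤ P sᶜ + ENNReal.ofReal (M / lam) := by rw [add_comm]; gcongr

end MeasureTheory

/-- `φ ∑_{i=k+1}^{K} θ^i` in closed form, i.e. the paper's
`- φ ∑_{i=1}^k θ^i + φ ∑_{i=1}^K θ^i`. -/
noncomputable def driftCompensator (θ φ : ℝ) (K k : ℕ) : ℝ :=
  φ * (θ ^ (K + 1) - θ ^ (k + 1)) / (θ - 1)

section driftCompensator

variable {θ φ : ℝ} {K k : ℕ}

theorem driftCompensator_nonneg (hθ : 1 ≤ θ) (hφ : 0 ≤ φ) (hk : k ≤ K) :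
    0 ≤ driftCompensator θ φ K k :=
  div_nonneg (mul_nonneg hφ (sub_nonneg.2 (pow_le_pow_right₀ hθ (by omega)))) (sub_nonneg.2 hθ)

theorem pow_succ_mul_add_driftCompensator_succ (hθ0 : θ ≠ 0) (hθ1 : θ ≠ 1) (v : ℝ) :
    θ ^ (k + 1) * (θ⁻¹ * v + φ) + driftCompensator θ φ K (k + 1) =
      θ ^ k * v + driftCompensator θ φ K k := by
  have : θ - 1 ≠ 0 := sub_ne_zero.2 hθ1
  unfold driftCompensator
  field_simp
  ring

theorem pow_mul_add_driftCompensator_le_iff (hθ0 : 0 < θ) (hθ1 : θ ≠ 1) (v lam : ℝ) :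
    θ ^ k * v + driftCompensator θ φ K k ≤ lam ↔
      v ≤ (lam - θ ^ (K + 1) * φ / (θ - 1)) * θ ^ (-(k : ℤ)) + θ * φ / (θ - 1) := by
  have hk : 0 < θ ^ k := pow_pos hθ0 k
  have : (lam - θ ^ (K + 1) * φ / (θ - 1)) * θ ^ (-(k : ℤ)) + θ * φ / (θ - 1) =
      (lam - driftCompensator θ φ K k) / θ ^ k := by
    have : θ - 1 ≠ 0 := sub_ne_zero.2 hθ1
    unfold driftCompensator
    rw [zpow_neg, zpow_natCast]
    field_simp
    ring
  rw [this, le_div_iff₀ hk, mul_comm, le_sub_iff_add_le]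

theorem driftCompensator_inv_one_sub_zero {α : ℝ} (hα0 : α ≠ 0) (hα1 : α ≠ 1) :
    driftCompensator (1 - α)⁻¹ φ K 0 = φ / α * ((1 - α) ^ (-(K : ℤ)) - 1) := by
  rw [zpow_neg, zpow_natCast, ← inv_pow]
  set θ := (1 - α)⁻¹
  have hθ : θ * (1 - α) = 1 := inv_mul_cancel₀ (sub_ne_zero.2 hα1.symm)
  have hθ0 : θ ≠ 0 := left_ne_zero_of_mul_eq_one hθ
  unfold driftCompensator
  rw [show θ - 1 = θ * α by linear_combination hθ]
  field_simp
  ring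

theorem lintegral_ofReal_pow_mul_add_driftCompensator_le {D : Type*} [MeasurableSpace D]
    {μ : Measure D} [IsProbabilityMeasure μ] {h : D → ℝ} (h0 : 0 ≤ h) (hint : Integrable h μ)
    {v : ℝ} (hθ : 1 < θ) (hφ : 0 ≤ φ) (hdrift : ∫ w, h w ∂μ ≤ θ⁻¹ * v + φ) (hk : k < K) :
    ∫⁻ w, ENNReal.ofReal (θ ^ (k + 1) * h w + driftCompensator θ φ K (k + 1)) ∂μ ≤
      ENNReal.ofReal (θ ^ k * v + driftCompensator θ φ K k) := by
  rw [← pow_succ_mul_add_driftCompensator_succ (by positivity) hθ.ne']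
  exact lintegral_ofReal_mul_add_le h0 hint hdrift (by positivity)
    (driftCompensator_nonneg hθ.le hφ hk)

end driftCompensator

/-- **Finite-horizon exit probability bound (Ville's inequality applied to the constructed
supermartingale).** For `x_{k+1} = f(x_k, d_k)` with `d_k` i.i.d. from `μ`, if the nonnegative
`V` satisfies `E_d[V(f(x,d))] ≤ (1-α)V(x) + φ`, then with `θ = 1/(1-α)` and
`ρ_k = (λ - θ^{K+1} φ/(θ-1)) θ^{-k} + θ φ/(θ-1)`,
`P{ V(x_k) ≤ ρ_k, ∀ k ≤ K } ≥ 1 - (V(x₀) + (φ/α)((1-α)^{-K} - 1))/λ`. -/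
theorem finite_horizon_exit_probability_bound {n m : ℕ}
    (f : EuclideanSpace ℝ (Fin n) → EuclideanSpace ℝ (Fin m) → EuclideanSpace ℝ (Fin n))
    (hf : Continuous (Function.uncurry f))
    (μ : Measure (EuclideanSpace ℝ (Fin m))) [IsProbabilityMeasure μ]
    (V : EuclideanSpace ℝ (Fin n) → ℝ) (hVmeas : Measurable V) (hVnonneg : ∀ x, 0 ≤ V x)
    (α φ : ℝ) (hα : α ∈ Set.Ioo (0 : ℝ) 1) (hφ : 0 ≤ φ)
    (hVint : ∀ x, Integrable (fun v => V (f x v)) μ)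
    (hdrift : ∀ x, (∫ v, V (f x v) ∂μ) ≤ (1 - α) * V x + φ)
    (K : ℕ) (x₀ : EuclideanSpace ℝ (Fin n)) (lam : ℝ) (hlam : 0 < lam)
    {Ω : Type*} {mΩ : MeasurableSpace Ω} (P : Measure Ω) [IsProbabilityMeasure P]
    (d : ℕ → Ω → EuclideanSpace ℝ (Fin m)) (hdmeas : ∀ k, Measurable (d k))
    (hindep : iIndepFun d P)
    (hdist : ∀ k, Measure.map (d k) P = μ)
    (x : ℕ → Ω → EuclideanSpace ℝ (Fin n))
    (hx0 : ∀ ω, x 0 ω = x₀)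
    (hxstep : ∀ k ω, x (k + 1) ω = f (x k ω) (d k ω))
    (θ : ℝ) (hθ : θ = (1 - α)⁻¹) :
    P {ω | ∀ k ≤ K, V (x k ω) ≤
        (lam - θ ^ (K + 1) * φ / (θ - 1)) * θ ^ (-(k : ℤ)) + θ * φ / (θ - 1)} ≥
      ENNReal.ofReal (1 - (V x₀ + (φ / α) * ((1 - α) ^ (-(K : ℤ)) - 1)) / lam) := by
  have hθ1 : 1 < θ := hθ ▸ (one_lt_inv₀ (by linarith [hα.2])).2 (by linarith [hα.1])
  have hαθ : 1 - α = θ⁻¹ := by rw [hθ, inv_inv]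
  have hc0 : driftCompensator θ φ K 0 = φ / α * ((1 - α) ^ (-(K : ℤ)) - 1) := by
    rw [hθ]; exact driftCompensator_inv_one_sub_zero hα.1.ne' hα.2.ne
  set c := driftCompensator θ φ K
  set W : ℕ → EuclideanSpace ℝ (Fin n) → ℝ≥0∞ := fun k y =>
    ENNReal.ofReal (θ ^ k * V y + c k)
  have hville := hindep.mul_measure_exists_lt_comp_le hdmeas hf.measurable hx0 hxstep (g := W)
    (fun k => ((hVmeas.const_mul _).add_const _).ennreal_ofReal)
    (fun k hk y => hdist k ▸ lintegral_ofReal_pow_mul_add_driftCompensator_le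
      (fun _ => hVnonneg _) (hVint y) hθ1 hφ (hαθ ▸ hdrift y) hk) (ENNReal.ofReal lam)
  have hevent : {ω | ∀ k ≤ K, V (x k ω) ≤
      (lam - θ ^ (K + 1) * φ / (θ - 1)) * θ ^ (-(k : ℤ)) + θ * φ / (θ - 1)} =
      {ω | ∃ k ≤ K, ENNReal.ofReal lam < W k (x k ω)}ᶜ := by
    ext ω
    simp [W, ENNReal.ofReal_lt_ofReal_iff_of_nonneg hlam.le, c,
      pow_mul_add_driftCompensator_le_iff (zero_lt_one.trans hθ1) hθ1.ne']
  rw [ge_iff_le, hevent, ← hc0]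
  exact ofReal_one_sub_div_le_measure_compl hlam
    (add_nonneg (hVnonneg x₀) (driftCompensator_nonneg hθ1.le hφ (Nat.zero_le K)))
    (by simpa [W] using hville)
end

section
/- Consider the additive-disturbance discrete-time system x_{k+1} = f̂(x_k) + d_k with f̂ : ℝⁿ → ℝⁿ continuous and d_k drawn i.i.d. from a distribution D on ℝⁿ with E[d] = 0 and E[‖d‖²] < ∞. Suppose V : ℝⁿ → ℝ_{≥0} is twice continuously differentiable and convex with sup_{x∈ℝⁿ} ‖∇²V(x)‖₂ ≤ λ_max for some λ_max ≥ 0, and suppose there exists α ∈ (0,1) such that the deterministic decrease condition V(f̂(x)) − V(x) ≤ −α V(x) holds for all x ∈ ℝⁿ. Then for all x ∈ ℝⁿ, E_{d∼D}[V(f̂(x) + d)] − V(x) ≤ −α V(x) + (λ_max/2) · tr(cov(d)); i.e., V satisfies the expected exponential-drift condition with additive constant (λ_max/2)·tr(cov(d)), which is finite whenever d ∈ L². -/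
/-!
Second-order Taylor with a bounded Hessian gives `V (y + d) ≤ V y + DV(y) d + (λmax / 2) ‖d‖²`
at `y = f̂ x`. Averaging over the centred disturbance kills the linear term, `E ‖d‖²` is the trace
of the second-moment matrix, and the deterministic decrease at `x` finishes the estimate.
-/

open MeasureTheory

section IteratedFDeriv

variable {𝕜 E F : Type*} [NontriviallyNormedField 𝕜] [NormedAddCommGroup E] [NormedSpace 𝕜 E]
  [NormedAddCommGroup F] [NormedSpace 𝕜 F]

theorem norm_fderiv_fderiv_eq_norm_iteratedFDeriv_two (f : E → F) (x : E) :
    ‖fderiv 𝕜 (fderiv 𝕜 f) x‖ = ‖iteratedFDeriv 𝕜 2 f x‖ := by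
  rw [← norm_iteratedFDeriv_one, norm_iteratedFDeriv_fderiv]

end IteratedFDeriv

section Taylor

variable {E F : Type*} [NormedAddCommGroup E] [NormedSpace ℝ E]
  [NormedAddCommGroup F] [NormedSpace ℝ F]

/-- Along `t ↦ y + t • v` the first-order remainder has derivative of norm at most `K t ‖v‖²`,
so it is fenced by `K t² ‖v‖² / 2`. -/
theorem norm_sub_sub_fderiv_le_of_norm_fderiv_sub_le {f : E → F} (hf : Differentiable ℝ f)
    {K : ℝ} (hK : ∀ a b, ‖fderiv ℝ f a - fderiv ℝ f b‖ ≤ K * ‖a - b‖) (y v : E) :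
    ‖f (y + v) - f y - fderiv ℝ f y v‖ ≤ K / 2 * ‖v‖ ^ 2 := by
  set r : ℝ → F := fun t => f (y + t • v) - f y - t • fderiv ℝ f y v
  have hr : ∀ t, HasDerivAt r (fderiv ℝ f (y + t • v) v - fderiv ℝ f y v) t := fun t => by
    have hline : HasDerivAt (fun t : ℝ => y + t • v) v t := by
      simpa using ((hasDerivAt_id t).smul_const v).const_add y
    exact (((hf _).hasFDerivAt.comp_hasDerivAt t hline).sub_const _).sub
      (by simpa using (hasDerivAt_id t).smul_const (fderiv ℝ f y v))
  have hB : ∀ t, HasDerivAt (fun t : ℝ => K / 2 * ‖v‖ ^ 2 * t ^ 2) (K * ‖v‖ ^ 2 * t) t :=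
    fun t => ((hasDerivAt_pow 2 t).const_mul (K / 2 * ‖v‖ ^ 2)).congr_deriv (by norm_num; ring)
  have hbound : ∀ t ∈ Set.Ico (0 : ℝ) 1,
      ‖fderiv ℝ f (y + t • v) v - fderiv ℝ f y v‖ ≤ K * ‖v‖ ^ 2 * t := by
    rintro t ⟨ht, -⟩
    calc ‖fderiv ℝ f (y + t • v) v - fderiv ℝ f y v‖
        = ‖(fderiv ℝ f (y + t • v) - fderiv ℝ f y) v‖ := rfl
      _ ≤ ‖fderiv ℝ f (y + t • v) - fderiv ℝ f y‖ * ‖v‖ := ContinuousLinearMap.le_opNorm _ _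
      _ ≤ K * ‖(y + t • v) - y‖ * ‖v‖ := by gcongr; exact hK _ _
      _ = K * ‖v‖ ^ 2 * t := by
        rw [add_sub_cancel_left, norm_smul, Real.norm_of_nonneg ht]; ring
  have := image_norm_le_of_norm_deriv_right_le_deriv_boundary
    (fun t _ => (hr t).continuousAt.continuousWithinAt) (fun t _ => (hr t).hasDerivWithinAt)
    (by simp [r]) hB hbound (Set.right_mem_Icc.2 zero_le_one)
  simpa [r] using this

theorem norm_sub_sub_fderiv_le_of_norm_iteratedFDeriv_two_le {f : E → F} (hf : ContDiff ℝ 2 f)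
    {K : ℝ} (hK : ∀ x, ‖iteratedFDeriv ℝ 2 f x‖ ≤ K) (y v : E) :
    ‖f (y + v) - f y - fderiv ℝ f y v‖ ≤ K / 2 * ‖v‖ ^ 2 := by
  have hf2 : Differentiable ℝ (fderiv ℝ f) :=
    (hf.fderiv_right (m := 1) (by norm_num)).differentiable (by norm_num)
  refine norm_sub_sub_fderiv_le_of_norm_fderiv_sub_le (hf.differentiable (by norm_num))
    (fun a b => ?_) y v
  exact convex_univ.norm_image_sub_le_of_norm_fderiv_le (fun x _ => hf2 x)
    (fun x _ => (norm_fderiv_fderiv_eq_norm_iteratedFDeriv_two f x).trans_le (hK x))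
    trivial trivial

end Taylor

section SecondMoment

variable {E : Type*} [NormedAddCommGroup E] [NormedSpace ℝ E] [CompleteSpace E]
  [MeasurableSpace E] {μ : Measure E} [IsProbabilityMeasure μ]

theorem integral_le_of_abs_sub_affine_le_mul_norm_sq (hd1 : Integrable (fun v => v) μ)
    (hmean : ∫ v, v ∂μ = 0) (hmom : Integrable (fun v => ‖v‖ ^ 2) μ) {g : E → ℝ}
    (hg : AEStronglyMeasurable g μ) (a : ℝ) (L : E →L[ℝ] ℝ) {C : ℝ}
    (h : ∀ v, |g v - (a + L v)| ≤ C * ‖v‖ ^ 2) :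
    ∫ v, g v ∂μ ≤ a + C * ∫ v, ‖v‖ ^ 2 ∂μ := by
  have haff : Integrable (fun v => a + L v) μ := (integrable_const a).add (L.integrable_comp hd1)
  have hupper : Integrable (fun v => a + L v + C * ‖v‖ ^ 2) μ := haff.add (hmom.const_mul C)
  have hgint : Integrable g μ := by
    have hrem : Integrable (fun v => g v - (a + L v)) μ :=
      (hmom.const_mul C).mono' (hg.sub haff.aestronglyMeasurable)
        (Filter.Eventually.of_forall h)
    exact (hrem.add haff).congr (Filter.Eventually.of_forall fun v => sub_add_cancel _ _)
  calc ∫ v, g v ∂μ ≤ ∫ v, a + L v + C * ‖v‖ ^ 2 ∂μ :=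
        integral_mono hgint hupper fun v => by linarith [(abs_le.1 (h v)).2]
    _ = a + C * ∫ v, ‖v‖ ^ 2 ∂μ := by
        rw [integral_add haff (hmom.const_mul C), integral_add (integrable_const a)
          (L.integrable_comp hd1), L.integral_comp_comm hd1, hmean, integral_const_mul]
        simp

end SecondMoment

theorem trace_secondMoment_eq_integral_norm_sq {ι : Type*} [Fintype ι]
    {μ : Measure (EuclideanSpace ℝ ι)} (hmom : Integrable (fun v => ‖v‖ ^ 2) μ) :
    Matrix.trace (Matrix.of fun i j : ι => ∫ v, v i * v j ∂μ) = ∫ v, ‖v‖ ^ 2 ∂μ := by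
  have hcoord : ∀ i, Integrable (fun v : EuclideanSpace ℝ ι => v i * v i) μ := fun i =>
    hmom.mono' (by fun_prop) (Filter.Eventually.of_forall fun v => by
      rw [norm_mul, ← sq]; gcongr; exact PiLp.norm_apply_le v i)
  simp only [Matrix.trace, Matrix.diag, Matrix.of_apply]
  rw [← integral_finsetSum _ fun i _ => hcoord i]
  simp_rw [EuclideanSpace.real_norm_sq_eq, sq]

theorem eiss_plus_bounded_hessian_implies_eissp_drift_general {n : ℕ}
    (fhat : EuclideanSpace ℝ (Fin n) → EuclideanSpace ℝ (Fin n))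
    (μ : Measure (EuclideanSpace ℝ (Fin n))) [IsProbabilityMeasure μ]
    (hd1 : Integrable (fun v => v) μ) (hmean : (∫ v, v ∂μ) = 0)
    (hmom : Integrable (fun v => ‖v‖ ^ 2) μ)
    (V : EuclideanSpace ℝ (Fin n) → ℝ)
    (hV : ContDiff ℝ 2 V)
    (lammax : ℝ)
    (hHess : ∀ x, ‖iteratedFDeriv ℝ 2 V x‖ ≤ lammax)
    (α : ℝ)
    (hdecrease : ∀ x, V (fhat x) - V x ≤ -(α * V x)) :
    ∀ x, (∫ v, V (fhat x + v) ∂μ) - V x ≤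
      -(α * V x) + (lammax / 2) *
        Matrix.trace (Matrix.of fun i j : Fin n => ∫ v, v i * v j ∂μ) := by
  intro x
  have htaylor := norm_sub_sub_fderiv_le_of_norm_iteratedFDeriv_two_le hV hHess (fhat x)
  have hdrift := integral_le_of_abs_sub_affine_le_mul_norm_sq (g := fun v => V (fhat x + v))
    hd1 hmean hmom (hV.continuous.comp (continuous_const_add (fhat x))).aestronglyMeasurable
    (V (fhat x)) (fderiv ℝ V (fhat x)) fun v => by simpa [sub_sub] using htaylor v
  rw [trace_secondMoment_eq_integral_norm_sq hmom]
  linarith [hdecrease x]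

/-- **Deterministic E-ISS Lyapunov function with bounded Hessian is an E-ISSp Lyapunov
function for additive zero-mean noise (core of Corollary 2).**  For the system
`x_{k+1} = f̂(x_k) + d_k` with `d_k` i.i.d. from a zero-mean distribution `μ` on `ℝⁿ` with
finite second moment, if `V : ℝⁿ → ℝ_{≥0}` is `C²`, convex, has `‖∇²V(x)‖₂ ≤ λmax`, and
satisfies the deterministic decrease `V(f̂(x)) - V(x) ≤ -α V(x)`, then for all `x`,
`E_d[V(f̂(x) + d)] - V(x) ≤ -α V(x) + (λmax/2) · tr(cov(d))`. -/
theorem eiss_plus_bounded_hessian_implies_eissp_drift {n : ℕ}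
    (fhat : EuclideanSpace ℝ (Fin n) → EuclideanSpace ℝ (Fin n))
    (hfhat : Continuous fhat)
    (μ : Measure (EuclideanSpace ℝ (Fin n))) [IsProbabilityMeasure μ]
    (hd1 : Integrable (fun v => v) μ) (hmean : (∫ v, v ∂μ) = 0)
    (hmom : Integrable (fun v => ‖v‖ ^ 2) μ)
    (V : EuclideanSpace ℝ (Fin n) → ℝ)
    (hV : ContDiff ℝ 2 V) (hVnonneg : ∀ x, 0 ≤ V x)
    (hconv : ConvexOn ℝ Set.univ V)
    (lammax : ℝ) (hlam : 0 ≤ lammax)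
    (hHess : ∀ x, ‖iteratedFDeriv ℝ 2 V x‖ ≤ lammax)
    (α : ℝ) (hα : α ∈ Set.Ioo (0 : ℝ) 1)
    (hdecrease : ∀ x, V (fhat x) - V x ≤ -(α * V x)) :
    ∀ x, (∫ v, V (fhat x + v) ∂μ) - V x ≤
      -(α * V x) + (lammax / 2) *
        Matrix.trace (Matrix.of fun i j : Fin n => ∫ v, v i * v j ∂μ) :=
  eiss_plus_bounded_hessian_implies_eissp_drift_general fhat μ hd1 hmean hmom V hV lammax hHess α
    hdecrease
end

section
/- Consider the discrete-time stochastic system x_{k+1} = f(x_k, d_k) with disturbances d_k drawn i.i.d. from a distribution D on ℝ^m. Suppose V : ℝⁿ → ℝ_{≥0} and there exist γ > 0 and an increasing function h : ℝ_{>0} → ℝ_{>0} such that E_{d∼D}[V(f(x,d))] − V(x) ≤ −h(V(x)) for all x with V(x) > γ. Then for any initial state x₀ with V(x₀) > γ, the hitting time τ_γ = inf{k ∈ ℕ : V(x_k) ≤ γ} of the sublevel set {x : V(x) ≤ γ} satisfies E[τ_γ] ≤ γ/h(γ) + ∫_γ^{V(x₀)} (1/h(σ)) dσ. -/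
open MeasureTheory ProbabilityTheory Filter Set
open scoped ENNReal

/-!
With `φ σ = 1 / h (max σ γ)`, which is antitone, the potential `g s = ∫₀ˢ φ` is concave with
supergradient `1 / h s` at every `s ≥ γ`. Hence the drift hypothesis on `V` turns into a drop of at
least one in the expected value of `g ∘ V` at every state outside `{V ≤ γ}`. The additive drift
argument then telescopes: if `Sⱼ` is the event that the target has not been hit by time `j`, the
independence of `dⱼ` from `d₀, …, dⱼ₋₁` gives
`P(Sⱼ) + E[g(V(xⱼ₊₁)); Sⱼ₊₁] ≤ E[g(V(xⱼ)); Sⱼ]`, so `E[τ] = ∑ⱼ P(Sⱼ) ≤ g(V(x₀))`, and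
`g(V(x₀)) = γ / h γ + ∫_γ^{V(x₀)} dσ / h σ`.
-/

namespace Antitone

variable {φ : ℝ → ℝ}

theorem intervalIntegral_le_sub_mul (hφ : Antitone φ) (s t : ℝ) :
    ∫ σ in s..t, φ σ ≤ (t - s) * φ s := by
  rcases le_total s t with hst | hts
  · calc ∫ σ in s..t, φ σ ≤ ∫ _ in s..t, φ s :=
          intervalIntegral.integral_mono_on hst hφ.intervalIntegrable intervalIntegrable_const
            fun σ hσ => hφ hσ.1
      _ = (t - s) * φ s := by simp
  · have : (s - t) * φ s ≤ ∫ σ in t..s, φ σ :=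
      calc (s - t) * φ s = ∫ _ in t..s, φ s := by simp
        _ ≤ ∫ σ in t..s, φ σ := intervalIntegral.integral_mono_on hts intervalIntegrable_const
            hφ.intervalIntegrable fun σ hσ => hφ hσ.2
    rw [intervalIntegral.integral_symm]
    linarith

theorem primitive_le_add_sub_mul (hφ : Antitone φ) (s t : ℝ) :
    ∫ σ in 0..t, φ σ ≤ (∫ σ in 0..s, φ σ) + (t - s) * φ s := by
  rw [← intervalIntegral.integral_add_adjacent_intervals (b := s) hφ.intervalIntegrable
    hφ.intervalIntegrable]
  linarith [hφ.intervalIntegral_le_sub_mul s t]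

variable {α : Type*} [MeasurableSpace α] {μ : Measure α}

theorem integrable_primitive_comp (hφ : Antitone φ) (hφ0 : ∀ σ, 0 ≤ φ σ) {W : α → ℝ}
    (hW : Measurable W) (hW0 : ∀ a, 0 ≤ W a) (hWint : Integrable W μ) :
    Integrable (fun a => ∫ σ in 0..W a, φ σ) μ := by
  refine (hWint.mul_const (φ 0)).mono
    ((intervalIntegral.continuous_primitive (fun _ _ => hφ.intervalIntegrable) 0).measurable.comp
      hW).aestronglyMeasurable (ae_of_all _ fun a => ?_)
  have hle := hφ.primitive_le_add_sub_mul 0 (W a)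
  rw [Real.norm_of_nonneg (intervalIntegral.integral_nonneg (hW0 a) fun σ _ => hφ0 σ),
    Real.norm_of_nonneg (mul_nonneg (hW0 a) (hφ0 0))]
  simpa only [intervalIntegral.integral_same, zero_add, sub_zero] using hle

theorem lintegral_primitive_comp_add_one_le [IsProbabilityMeasure μ] (hφ : Antitone φ)
    (hφ0 : ∀ σ, 0 ≤ φ σ) {W : α → ℝ} (hW : Measurable W) (hW0 : ∀ a, 0 ≤ W a)
    (hWint : Integrable W μ) {s : ℝ} (hdrift : (∫ a, W a ∂μ - s) * φ s ≤ -1) :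
    ∫⁻ a, ENNReal.ofReal (∫ σ in 0..W a, φ σ) ∂μ + 1 ≤ ENNReal.ofReal (∫ σ in 0..s, φ σ) := by
  have hint := hφ.integrable_primitive_comp hφ0 hW hW0 hWint
  have hlin : Integrable (fun a => (W a - s) * φ s) μ :=
    (hWint.sub (integrable_const s)).mul_const _
  have hmean : ∫ a, (∫ σ in 0..W a, φ σ) ∂μ ≤ (∫ σ in 0..s, φ σ) - 1 :=
    calc ∫ a, (∫ σ in 0..W a, φ σ) ∂μ ≤ ∫ a, ((∫ σ in 0..s, φ σ) + (W a - s) * φ s) ∂μ :=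
          integral_mono hint ((integrable_const _).add hlin)
            fun a => hφ.primitive_le_add_sub_mul s (W a)
      _ = (∫ σ in 0..s, φ σ) + (∫ a, W a ∂μ - s) * φ s := by
          rw [integral_add (integrable_const _) hlin,
            integral_mul_const, integral_sub hWint (integrable_const s)]
          simp
      _ ≤ (∫ σ in 0..s, φ σ) - 1 := by linarith
  have hmean0 : 0 ≤ ∫ a, (∫ σ in 0..W a, φ σ) ∂μ :=
    integral_nonneg fun a => intervalIntegral.integral_nonneg (hW0 a) fun σ _ => hφ0 σ
  rw [← ofReal_integral_eq_lintegral_ofReal hint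
    (ae_of_all _ fun a => intervalIntegral.integral_nonneg (hW0 a) fun σ _ => hφ0 σ),
    ← ENNReal.ofReal_one, ← ENNReal.ofReal_add hmean0 zero_le_one]
  exact ENNReal.ofReal_le_ofReal (by linarith)

end Antitone

section InvMax

variable {γ : ℝ} {h : ℝ → ℝ}

theorem antitone_inv_max (hγ : 0 < γ) (hpos : ∀ s, 0 < s → 0 < h s)
    (hmono : MonotoneOn h (Ioi 0)) : Antitone fun σ => (h (max σ γ))⁻¹ := fun a b hab =>
  inv_anti₀ (hpos _ (hγ.trans_le (le_max_right a γ)))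
    (hmono (hγ.trans_le (le_max_right a γ)) (hγ.trans_le (le_max_right b γ))
      (max_le_max_right γ hab))

theorem integral_inv_max_eq (hφ : Antitone fun σ => (h (max σ γ))⁻¹) (hγ : 0 ≤ γ) {s : ℝ}
    (hs : γ ≤ s) : ∫ σ in 0..s, (h (max σ γ))⁻¹ = γ / h γ + ∫ σ in γ..s, 1 / h σ := by
  rw [← intervalIntegral.integral_add_adjacent_intervals (b := γ) hφ.intervalIntegrable
    hφ.intervalIntegrable]
  congr 1
  · rw [intervalIntegral.integral_congr (g := fun _ => (h γ)⁻¹) fun σ hσ => ?_]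
    · simp [div_eq_mul_inv]
    · rw [uIcc_of_le hγ] at hσ
      rw [max_eq_right hσ.2]
  · refine intervalIntegral.integral_congr fun σ hσ => ?_
    rw [uIcc_of_le hs] at hσ
    simp [max_eq_left hσ.1]

end InvMax

theorem ENNReal.tsum_le_of_add_le {a u : ℕ → ℝ≥0∞} (h : ∀ j, a j + u (j + 1) ≤ u j) :
    ∑' j, a j ≤ u 0 := by
  have hpartial : ∀ k, ∑ j ∈ Finset.range k, a j + u k ≤ u 0 := by
    intro k
    induction k with
    | zero => simp
    | succ k ih =>
      calc ∑ j ∈ Finset.range (k + 1), a j + u (k + 1)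
          = ∑ j ∈ Finset.range k, a j + (a k + u (k + 1)) := by
            rw [Finset.sum_range_succ, add_assoc]
        _ ≤ ∑ j ∈ Finset.range k, a j + u k := by gcongr; exact h k
        _ ≤ u 0 := ih
  rw [ENNReal.tsum_eq_iSup_nat]
  exact iSup_le fun k => le_self_add.trans (hpartial k)

theorem iInf_natCast_eq_tsum (p : ℕ → Prop) [DecidablePred p] :
    ⨅ (k : ℕ) (_ : p k), (k : ℝ≥0∞) = ∑' j, if ∀ i ≤ j, ¬ p i then 1 else 0 := by
  by_cases hex : ∃ k, p k
  · have hle : ⨅ (k : ℕ) (_ : p k), (k : ℝ≥0∞) = Nat.find hex :=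
      le_antisymm (iInf₂_le _ (Nat.find_spec hex))
        (le_iInf₂ fun k hk => by exact_mod_cast Nat.find_min' hex hk)
    simp_rw [hle, ← Nat.lt_find_iff hex]
    rw [tsum_eq_sum (s := Finset.range (Nat.find hex)) fun j hj => by simpa using hj]
    rw [Finset.sum_ite_of_true fun j hj => Finset.mem_range.1 hj]
    simp
  · push Not at hex
    simp [hex]

section Independence

variable {Ω β γ : Type*} [MeasurableSpace β] [MeasurableSpace γ] {Y : Ω → β} {Z : Ω → γ}

theorem ProbabilityTheory.IndepFun.lintegral_comp_eq {mΩ : MeasurableSpace Ω} {P : Measure Ω}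
    [IsFiniteMeasure P] (hY : Measurable Y) (hZ : Measurable Z) (hYZ : IndepFun Y Z P)
    {F : β → γ → ℝ≥0∞} (hF : Measurable (Function.uncurry F)) :
    ∫⁻ ω, F (Y ω) (Z ω) ∂P = ∫⁻ ω, ∫⁻ v, F (Y ω) v ∂(P.map Z) ∂P := by
  change ∫⁻ ω, Function.uncurry F (Y ω, Z ω) ∂P = _
  rw [← lintegral_map hF (hY.prodMk hZ),
    (indepFun_iff_map_prod_eq_prod_map_map hY.aemeasurable hZ.aemeasurable).1 hYZ,
    lintegral_prod _ hF.aemeasurable, lintegral_map hF.lintegral_prod_right' hY]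
  rfl

theorem setLIntegral_comp_eq_of_indep {m mΩ : MeasurableSpace Ω} {P : Measure Ω}
    [IsFiniteMeasure P] (hm : m ≤ mΩ) (hZ : Measurable Z)
    (hind : Indep m (MeasurableSpace.comap Z inferInstance) P) (hY : Measurable[m] Y)
    {B : Set Ω} (hB : MeasurableSet[m] B) {F : β → γ → ℝ≥0∞}
    (hF : Measurable (Function.uncurry F)) :
    ∫⁻ ω in B, F (Y ω) (Z ω) ∂P = ∫⁻ ω in B, ∫⁻ v, F (Y ω) v ∂(P.map Z) ∂P := by
  have hYB : Measurable[m] fun ω => (Y ω, B.indicator (1 : Ω → ℝ≥0∞) ω) :=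
    hY.prodMk (measurable_const.indicator hB)
  have hindYB : IndepFun (fun ω => (Y ω, B.indicator (1 : Ω → ℝ≥0∞) ω)) Z P :=
    (IndepFun_iff_Indep _ _ _).2 (indep_of_indep_of_le_left hind hYB.comap_le)
  have key := hindYB.lintegral_comp_eq (hYB.mono hm le_rfl) hZ
    (F := fun p v => p.2 * F p.1 v)
    ((measurable_snd.comp measurable_fst).mul (hF.comp
      ((measurable_fst.comp measurable_fst).prodMk measurable_snd)))
  have hB_mul (g : Ω → ℝ≥0∞) : ∫⁻ ω in B, g ω ∂P = ∫⁻ ω, B.indicator 1 ω * g ω ∂P := by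
    rw [← lintegral_indicator (hm B hB)]
    congr 1 with ω
    by_cases hω : ω ∈ B <;> simp [hω]
  rw [hB_mul, hB_mul, key]
  simp only [lintegral_const_mul _ hF.of_uncurry_left]

end Independence

section Chain

variable {Ω E D : Type*}

def survivalSet (x : ℕ → Ω → E) (A : Set E) (j : ℕ) : Set Ω := {ω | ∀ i ≤ j, x i ω ∉ A}

noncomputable def hittingTime (x : ℕ → Ω → E) (A : Set E) (ω : Ω) : ℝ≥0∞ :=
  ⨅ (k : ℕ) (_ : x k ω ∈ A), (k : ℝ≥0∞)

theorem hittingTime_eq_tsum_indicator (x : ℕ → Ω → E) (A : Set E) (ω : Ω) :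
    hittingTime x A ω = ∑' j, (survivalSet x A j).indicator 1 ω := by
  classical
  rw [hittingTime, iInf_natCast_eq_tsum]
  congr! 1 with j
  simp [survivalSet, indicator_apply]

variable [MeasurableSpace E] [MeasurableSpace D]

abbrev pastSigma (d : ℕ → Ω → D) (j : ℕ) : MeasurableSpace Ω :=
  ⨆ i ∈ Iio j, MeasurableSpace.comap (d i) inferInstance

theorem pastSigma_mono (d : ℕ → Ω → D) : Monotone (pastSigma d) := fun _ _ hij =>
  biSup_mono fun _ hk => Iio_subset_Iio hij hk

theorem pastSigma_le {mΩ : MeasurableSpace Ω} {d : ℕ → Ω → D} (hd : ∀ k, Measurable (d k))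
    (j : ℕ) : pastSigma d j ≤ mΩ :=
  iSup₂_le fun k _ => (hd k).comap_le

theorem measurable_pastSigma_succ (d : ℕ → Ω → D) (j : ℕ) : Measurable[pastSigma d (j + 1)] (d j) :=
  (comap_measurable (d j)).mono
    (le_iSup₂ (f := fun i (_ : i ∈ Iio (j + 1)) => MeasurableSpace.comap (d i) inferInstance) j
      (Nat.lt_succ_self j)) le_rfl

theorem indep_pastSigma {mΩ : MeasurableSpace Ω} {P : Measure Ω} {d : ℕ → Ω → D}
    (hd : ∀ k, Measurable (d k)) (hind : iIndepFun d P) (j : ℕ) :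
    Indep (pastSigma d j) (MeasurableSpace.comap (d j) inferInstance) P := by
  refine indep_of_indep_of_le_right
    (indep_iSup_of_disjoint (fun k => (hd k).comap_le) hind.iIndep (S := Iio j) (T := {j})
      (by simp)) ?_
  exact le_iSup₂ (f := fun i (_ : i ∈ ({j} : Set ℕ)) => MeasurableSpace.comap (d i) inferInstance)
    j rfl

variable {f : E → D → E} {d : ℕ → Ω → D} {x₀ : E} {x : ℕ → Ω → E}

theorem measurable_pastSigma_of_step (hf : Measurable (Function.uncurry f))
    (hx0 : ∀ ω, x 0 ω = x₀) (hxstep : ∀ k ω, x (k + 1) ω = f (x k ω) (d k ω)) :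
    ∀ j, Measurable[pastSigma d j] (x j)
  | 0 => by
    rw [show x 0 = fun _ => x₀ from funext hx0]
    exact measurable_const
  | j + 1 => by
    rw [show x (j + 1) = fun ω => Function.uncurry f (x j ω, d j ω) from funext (hxstep j)]
    exact hf.comp (((measurable_pastSigma_of_step hf hx0 hxstep j).mono
      (pastSigma_mono d j.le_succ) le_rfl).prodMk (measurable_pastSigma_succ d j))

theorem measurableSet_pastSigma_survivalSet (hx : ∀ j, Measurable[pastSigma d j] (x j))
    {A : Set E} (hA : MeasurableSet A) (j : ℕ) :
    MeasurableSet[pastSigma d j] (survivalSet x A j) := by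
  simp only [survivalSet, ofPred_forall]
  exact MeasurableSet.iInter fun i => MeasurableSet.iInter fun hi =>
    ((hx i).mono (pastSigma_mono d hi) le_rfl) hA.compl

theorem setLIntegral_comp_succ_eq {mΩ : MeasurableSpace Ω} {P : Measure Ω} [IsFiniteMeasure P]
    {μ : Measure D} (hf : Measurable (Function.uncurry f)) (hd : ∀ k, Measurable (d k))
    (hind : iIndepFun d P) (hdist : ∀ k, P.map (d k) = μ)
    (hxstep : ∀ k ω, x (k + 1) ω = f (x k ω) (d k ω)) {j : ℕ} (hx : Measurable[pastSigma d j] (x j))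
    {B : Set Ω} (hB : MeasurableSet[pastSigma d j] B) {Φ : E → ℝ≥0∞} (hΦ : Measurable Φ) :
    ∫⁻ ω in B, Φ (x (j + 1) ω) ∂P = ∫⁻ ω in B, ∫⁻ v, Φ (f (x j ω) v) ∂μ ∂P := by
  simp only [hxstep, ← hdist j]
  exact setLIntegral_comp_eq_of_indep (pastSigma_le hd j) (hd j) (indep_pastSigma hd hind j) hx hB
    (F := fun y v => Φ (f y v)) (hΦ.comp hf)

theorem lintegral_hittingTime_le {mΩ : MeasurableSpace Ω} {P : Measure Ω} [IsProbabilityMeasure P]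
    {μ : Measure D} (hf : Measurable (Function.uncurry f)) (hd : ∀ k, Measurable (d k))
    (hind : iIndepFun d P) (hdist : ∀ k, P.map (d k) = μ) (hx0 : ∀ ω, x 0 ω = x₀)
    (hxstep : ∀ k ω, x (k + 1) ω = f (x k ω) (d k ω)) {A : Set E} (hA : MeasurableSet A)
    {Φ : E → ℝ≥0∞} (hΦ : Measurable Φ) (hdrift : ∀ y ∉ A, ∫⁻ v, Φ (f y v) ∂μ + 1 ≤ Φ y) :
    ∫⁻ ω, hittingTime x A ω ∂P ≤ Φ x₀ := by
  have hx := measurable_pastSigma_of_step hf hx0 hxstep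
  have hS := measurableSet_pastSigma_survivalSet hx hA
  have hS' (j : ℕ) : MeasurableSet (survivalSet x A j) := pastSigma_le hd j _ (hS j)
  have hstep (j : ℕ) : P (survivalSet x A j) + ∫⁻ ω in survivalSet x A (j + 1), Φ (x (j + 1) ω) ∂P
      ≤ ∫⁻ ω in survivalSet x A j, Φ (x j ω) ∂P :=
    calc P (survivalSet x A j) + ∫⁻ ω in survivalSet x A (j + 1), Φ (x (j + 1) ω) ∂P
        ≤ P (survivalSet x A j) + ∫⁻ ω in survivalSet x A j, Φ (x (j + 1) ω) ∂P := by
          gcongr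
          exact fun ω hω i hi => hω i (hi.trans j.le_succ)
      _ = ∫⁻ ω in survivalSet x A j, (∫⁻ v, Φ (f (x j ω) v) ∂μ + 1) ∂P := by
          rw [setLIntegral_comp_succ_eq hf hd hind hdist hxstep (hx j) (hS j) hΦ,
            lintegral_add_right _ measurable_const, setLIntegral_one, add_comm]
      _ ≤ ∫⁻ ω in survivalSet x A j, Φ (x j ω) ∂P :=
          setLIntegral_mono' (hS' j) fun ω hω => hdrift _ (hω j le_rfl)
  calc ∫⁻ ω, hittingTime x A ω ∂P = ∑' j, P (survivalSet x A j) := by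
        simp_rw [hittingTime_eq_tsum_indicator]
        rw [lintegral_tsum fun j => (measurable_one.indicator (hS' j)).aemeasurable]
        simp_rw [lintegral_indicator_one (hS' _)]
    _ ≤ ∫⁻ ω in survivalSet x A 0, Φ (x 0 ω) ∂P := ENNReal.tsum_le_of_add_le hstep
    _ ≤ ∫⁻ ω, Φ (x 0 ω) ∂P := setLIntegral_le_lintegral _ _
    _ = Φ x₀ := by simp [hx0]

end Chain

/-- **Variable drift theorem (Lengler).** For the system `x_{k+1} = f(x_k,d_k)` with `d_k`
i.i.d. from `μ`, suppose `V : ℝⁿ → ℝ_{≥0}`, `γ > 0`, and there is an increasing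
`h : ℝ_{>0} → ℝ_{>0}` with `E_d[V(f(x,d))] - V(x) ≤ -h(V(x))` whenever `V(x) > γ`.  Then for
any initial state with `V(x₀) > γ`, the hitting time `τ_γ = inf{k : V(x_k) ≤ γ}` satisfies
`E[τ_γ] ≤ γ/h(γ) + ∫_γ^{V(x₀)} dσ/h(σ)`. -/
theorem variable_drift_hitting_time {n m : ℕ}
    (f : EuclideanSpace ℝ (Fin n) → EuclideanSpace ℝ (Fin m) → EuclideanSpace ℝ (Fin n))
    (hf : Continuous (Function.uncurry f))
    (μ : Measure (EuclideanSpace ℝ (Fin m))) [IsProbabilityMeasure μ]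
    (V : EuclideanSpace ℝ (Fin n) → ℝ) (hVmeas : Measurable V) (hVnonneg : ∀ x, 0 ≤ V x)
    (γ : ℝ) (hγ : 0 < γ)
    (h : ℝ → ℝ) (hpos : ∀ s, 0 < s → 0 < h s) (hmono : MonotoneOn h (Set.Ioi 0))
    (hVint : ∀ x, Integrable (fun v => V (f x v)) μ)
    (hdrift : ∀ x, γ < V x → (∫ v, V (f x v) ∂μ) - V x ≤ -h (V x))
    {Ω : Type*} {mΩ : MeasurableSpace Ω} (P : Measure Ω) [IsProbabilityMeasure P]
    (d : ℕ → Ω → EuclideanSpace ℝ (Fin m)) (hdmeas : ∀ k, Measurable (d k))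
    (hindep : iIndepFun d P)
    (hdist : ∀ k, Measure.map (d k) P = μ)
    (x₀ : EuclideanSpace ℝ (Fin n)) (hx₀ : γ < V x₀)
    (x : ℕ → Ω → EuclideanSpace ℝ (Fin n))
    (hx0 : ∀ ω, x 0 ω = x₀)
    (hxstep : ∀ k ω, x (k + 1) ω = f (x k ω) (d k ω)) :
    (∫⁻ ω, ⨅ (k : ℕ) (_ : V (x k ω) ≤ γ), (k : ENNReal) ∂P) ≤
      ENNReal.ofReal (γ / h γ + ∫ σ in γ..(V x₀), 1 / h σ) := by
  set φ : ℝ → ℝ := fun σ => (h (max σ γ))⁻¹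
  have hφ : Antitone φ := antitone_inv_max hγ hpos hmono
  have hφ0 (σ : ℝ) : 0 ≤ φ σ := inv_nonneg.2 (hpos _ (hγ.trans_le (le_max_right σ γ))).le
  have hg : Continuous fun s => ∫ σ in 0..s, φ σ :=
    intervalIntegral.continuous_primitive (fun _ _ => hφ.intervalIntegrable) 0
  have hfm := hf.measurable
  rw [← integral_inv_max_eq hφ hγ.le hx₀.le]
  refine lintegral_hittingTime_le (A := {y | V y ≤ γ})
    (Φ := fun y => ENNReal.ofReal (∫ σ in 0..V y, φ σ)) hfm hdmeas hindep hdist hx0 hxstep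
    (measurableSet_le hVmeas measurable_const)
    (ENNReal.measurable_ofReal.comp (hg.measurable.comp hVmeas)) fun y hy => ?_
  have hy : γ < V y := lt_of_not_ge hy
  refine hφ.lintegral_primitive_comp_add_one_le hφ0 (W := fun v => V (f y v))
    (hVmeas.comp (hfm.comp measurable_prodMk_left))
    (fun _ => hVnonneg _) (hVint y) ?_
  have hhy := hpos _ (hγ.trans hy)
  simp only [φ, max_eq_left hy.le]
  rw [← div_eq_mul_inv, div_le_iff₀ hhy]
  linarith [hdrift y hy]
end

section
/- Consider the discrete-time stochastic system x_{k+1} = f(x_k, d_k) with disturbances d_k drawn i.i.d. from a distribution D on ℝ^m, and suppose V : ℝⁿ → ℝ_{≥0} satisfies E_{d∼D}[V(f(x,d))] − V(x) ≤ −α V(x) + φ for all x ∈ ℝⁿ, where α ∈ (0,1) and φ ≥ 0. Then for every γ > φ/α and every initial state x₀ with V(x₀) > γ, the hitting time τ_γ = inf{k ∈ ℕ : V(x_k) ≤ γ} satisfies E[τ_γ] ≤ γ/(αγ − φ) + (1/α) · log((α V(x₀) − φ)/(αγ − φ)) < ∞, and consequently P{τ_γ < ∞} = 1. -/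
/-!
Let `p k = P(τ > k)` and `a k = E[V(x k); τ > k]`. Since `d k` is independent of `d 0, …, d (k-1)`,
the drift inequality gives `a (k+1) ≤ (1 - α) a k + φ p k`, and `γ p k ≤ a k` because `V > γ` before
the hitting time. The normalised quantity `m k = (α a k - φ p k) / (α γ - φ)` dominates `p k`,
starts below `R = (α V x₀ - φ) / (α γ - φ)`, and contracts by `1 - α` up to the increments
`p k - p (k+1)`. Hence `p k ≤ min 1 ((1 - α)^k R)` plus an error of total mass at most
`φ / (α (α γ - φ))`, and the sum of the first term is controlled by the potential
`log⁺ R + min 1 R`.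
Summing gives `∑ p k ≤ γ / (α γ - φ) + α⁻¹ log R`, which bounds `E τ = ∑ P(τ > k)`;
Borel–Cantelli then gives `τ < ∞` almost surely.
-/

open MeasureTheory ProbabilityTheory Set
open scoped ENNReal

section DriftSequence

open Finset

theorem posLog_mul_add_min_one_le {c R : ℝ} (hc0 : 0 ≤ c) (hc1 : c ≤ 1) (hR : 0 ≤ R) :
    Real.posLog (c * R) + min 1 (c * R) ≤ Real.posLog R + c * min 1 R := by
  have hcR0 : 0 ≤ c * R := mul_nonneg hc0 hR
  rcases le_total R 1 with hR1 | hR1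
  · have hcR : c * R ≤ 1 := by nlinarith
    rw [min_eq_right hR1, min_eq_right hcR,
      (Real.posLog_eq_zero_iff _).2 (abs_le.2 ⟨by linarith, hcR⟩),
      (Real.posLog_eq_zero_iff _).2 (abs_le.2 ⟨by linarith, hR1⟩)]
  have hR0 : 0 < R := by linarith
  rw [min_eq_left hR1, Real.posLog_eq_log (x := R) (by rwa [abs_of_pos hR0])]
  rcases le_total (c * R) 1 with hcR | hcR
  · rw [min_eq_right hcR, (Real.posLog_eq_zero_iff _).2 (abs_le.2 ⟨by linarith, hcR⟩)]
    have hc : c ≤ R⁻¹ := by rwa [← one_div, le_div_iff₀ hR0]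
    nlinarith [Real.one_sub_inv_le_log_of_pos hR0, mul_inv_cancel₀ hR0.ne']
  · have hc : 0 < c := by nlinarith
    rw [min_eq_left hcR, Real.posLog_eq_log (by rwa [abs_of_nonneg hcR0]),
      Real.log_mul hc.ne' hR0.ne']
    linarith [Real.log_le_sub_one_of_pos hc]

theorem one_sub_mul_sum_min_one_geom_le_posLog {c : ℝ} (hc0 : 0 ≤ c) (hc1 : c ≤ 1) (N : ℕ) :
    ∀ R, 0 ≤ R → (1 - c) * ∑ k ∈ range N, min 1 (c ^ k * R) ≤ Real.posLog R + min 1 R := by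
  induction N with
  | zero => intro R hR; simpa using add_nonneg Real.posLog_nonneg (le_min zero_le_one hR)
  | succ N ih =>
    intro R hR
    have hshift := ih (c * R) (mul_nonneg hc0 hR)
    rw [sum_range_succ', pow_zero, one_mul, mul_add]
    simp only [pow_succ, mul_assoc]
    linarith [posLog_mul_add_min_one_le hc0 hc1 hR]

theorem one_sub_mul_sum_min_one_geom_le {c R : ℝ} (hc0 : 0 ≤ c) (hc1 : c ≤ 1) (hR : 1 ≤ R)
    (N : ℕ) : (1 - c) * ∑ k ∈ range N, min 1 (c ^ k * R) ≤ Real.log R + 1 := by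
  have h := one_sub_mul_sum_min_one_geom_le_posLog hc0 hc1 N R (by linarith)
  rwa [min_eq_left hR, Real.posLog_eq_log (by rwa [abs_of_nonneg (by linarith)])] at h

theorem one_sub_mul_sum_le_sum_of_le_mul_add {c : ℝ} {y q : ℕ → ℝ} (hy : ∀ k, 0 ≤ y k)
    (hy0 : y 0 = 0) (hrec : ∀ k, y (k + 1) ≤ c * y k + q k) (N : ℕ) :
    (1 - c) * ∑ k ∈ range N, y k ≤ ∑ k ∈ range N, q k := by
  have hshift : ∑ k ∈ range N, y k + y N = ∑ k ∈ range N, y (k + 1) := by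
    rw [← sum_range_succ, sum_range_succ', hy0, add_zero]
  have hstep : ∑ k ∈ range N, y (k + 1) ≤ c * ∑ k ∈ range N, y k + ∑ k ∈ range N, q k := by
    rw [mul_sum, ← sum_add_distrib]
    exact sum_le_sum fun k _ => hrec k
  linarith [hy N]

theorem one_sub_mul_sum_le_of_drift {c κ R : ℝ} {p m : ℕ → ℝ} (hc0 : 0 ≤ c) (hc1 : c ≤ 1)
    (hκ : 0 ≤ κ) (hR : 1 ≤ R) (hp : Antitone p) (hp0 : ∀ k, 0 ≤ p k) (hp1 : ∀ k, p k ≤ 1)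
    (hpm : ∀ k, p k ≤ m k) (hm0 : m 0 ≤ R) (hm : ∀ k, m (k + 1) ≤ c * m k + κ * (p k - p (k + 1)))
    (N : ℕ) : (1 - c) * ∑ k ∈ range N, p k ≤ Real.log R + 1 + κ := by
  -- split `m k` into the geometric decay `c ^ k * R` of the initial value and an excess `y k`
  set y : ℕ → ℝ := fun k => max 0 (m k - c ^ k * R)
  have hy0 : y 0 = 0 := max_eq_left (by simp [hm0])
  have hdecr : ∀ k, 0 ≤ κ * (p k - p (k + 1)) := fun k =>
    mul_nonneg hκ (sub_nonneg.2 (hp k.le_succ))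
  have hy : ∀ k, y (k + 1) ≤ c * y k + κ * (p k - p (k + 1)) := fun k => by
    have hcy : c * (m k - c ^ k * R) ≤ c * y k := mul_le_mul_of_nonneg_left (le_max_right _ _) hc0
    refine max_le (add_nonneg (mul_nonneg hc0 (le_max_left _ _)) (hdecr k)) ?_
    rw [pow_succ]
    nlinarith [hm k]
  have hpy : ∀ k, p k ≤ min 1 (c ^ k * R) + y k := fun k =>
    calc p k ≤ min 1 (c ^ k * R + y k) :=
          le_min (hp1 k) ((hpm k).trans (by linarith [le_max_right 0 (m k - c ^ k * R)]))
      _ ≤ min (1 + y k) (c ^ k * R + y k) := min_le_min_right _ (by simp [y])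
      _ = min 1 (c ^ k * R) + y k := min_add_add_right _ _ _
  have htelescope : ∑ k ∈ range N, κ * (p k - p (k + 1)) ≤ κ := by
    rw [← mul_sum, sum_range_sub']
    nlinarith [hp0 N, hp1 0]
  calc (1 - c) * ∑ k ∈ range N, p k
      ≤ (1 - c) * ∑ k ∈ range N, min 1 (c ^ k * R) + (1 - c) * ∑ k ∈ range N, y k := by
        rw [← mul_add, ← sum_add_distrib]
        exact mul_le_mul_of_nonneg_left (sum_le_sum fun k _ => hpy k) (by linarith)
    _ ≤ Real.log R + 1 + κ := by
        linarith [one_sub_mul_sum_min_one_geom_le hc0 hc1 hR N,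
          one_sub_mul_sum_le_sum_of_le_mul_add (y := y) (fun k => le_max_left _ _) hy0 hy N]

theorem sum_le_of_drift {α φ γ V₀ : ℝ} {p a : ℕ → ℝ} (hα0 : 0 < α) (hα1 : α ≤ 1) (hφ : 0 ≤ φ)
    (hγ : φ / α < γ) (hV₀ : γ ≤ V₀) (hp : Antitone p) (hp0 : ∀ k, 0 ≤ p k) (hp1 : p 0 = 1)
    (ha0 : a 0 ≤ V₀) (hpa : ∀ k, γ * p k ≤ a k)
    (ha : ∀ k, a (k + 1) ≤ (1 - α) * a k + φ * p k) (N : ℕ) :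
    ∑ k ∈ range N, p k ≤
      γ / (α * γ - φ) + (1 / α) * Real.log ((α * V₀ - φ) / (α * γ - φ)) := by
  set D := α * γ - φ
  have hD : 0 < D := by rw [div_lt_iff₀ hα0] at hγ; linarith
  -- `(α a - φ p) / (α γ - φ)` is the drift normalised so that `p k ≤ m k` and `m` contracts
  have h := one_sub_mul_sum_le_of_drift (c := 1 - α) (κ := φ / D) (R := (α * V₀ - φ) / D)
    (m := fun k => (α * a k - φ * p k) / D) (by linarith) (by linarith)
    (div_nonneg hφ hD.le) ((one_le_div hD).2 (by nlinarith)) hp hp0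
    (fun k => hp1 ▸ hp (Nat.zero_le k))
    (fun k => by rw [le_div_iff₀ hD]; nlinarith [hpa k])
    (by rw [hp1, mul_one]; gcongr)
    (fun k => by
      have hrhs : (1 - α) * ((α * a k - φ * p k) / D) + φ / D * (p k - p (k + 1)) =
          ((1 - α) * (α * a k - φ * p k) + φ * (p k - p (k + 1))) / D := by ring
      rw [hrhs]
      gcongr
      nlinarith [ha k])
    N
  rw [sub_sub_cancel] at h
  calc ∑ k ∈ range N, p k = (α * ∑ k ∈ range N, p k) / α := by field_simp
    _ ≤ (Real.log ((α * V₀ - φ) / D) + 1 + φ / D) / α := by gcongr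
    _ = γ / D + 1 / α * Real.log ((α * V₀ - φ) / D) := by field_simp; ring

theorem tsum_le_of_drift {α φ γ V₀ : ℝ} {p a : ℕ → ℝ≥0∞} (hα0 : 0 < α) (hα1 : α ≤ 1)
    (hφ : 0 ≤ φ) (hγ : φ / α < γ) (hV₀ : γ ≤ V₀) (hp : Antitone p) (hp1 : p 0 = 1)
    (ha0 : a 0 ≤ ENNReal.ofReal V₀) (hpa : ∀ k, ENNReal.ofReal γ * p k ≤ a k)
    (ha : ∀ k, a (k + 1) ≤ ENNReal.ofReal (1 - α) * a k + ENNReal.ofReal φ * p k) :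
    ∑' k, p k ≤ ENNReal.ofReal
      (γ / (α * γ - φ) + (1 / α) * Real.log ((α * V₀ - φ) / (α * γ - φ))) := by
  have hγ0 : 0 ≤ γ := (div_nonneg hφ hα0.le).trans hγ.le
  have hp_ne_top : ∀ k, p k ≠ ∞ := fun k => ne_top_of_le_ne_top (by simp [hp1]) (hp k.zero_le)
  have ha_ne_top : ∀ k, a k ≠ ∞ := by
    intro k
    induction k with
    | zero => exact ne_top_of_le_ne_top ENNReal.ofReal_ne_top ha0
    | succ k ih => exact ne_top_of_le_ne_top (by simp [ENNReal.mul_eq_top, ih, hp_ne_top]) (ha k)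
  refine ENNReal.tsum_le_of_sum_range_le fun N => ?_
  rw [← ENNReal.ofReal_toReal (a := ∑ k ∈ range N, p k)
      (ENNReal.sum_ne_top.2 fun k _ => hp_ne_top k), ENNReal.toReal_sum fun k _ => hp_ne_top k]
  refine ENNReal.ofReal_le_ofReal (sum_le_of_drift (a := fun k => (a k).toReal) hα0 hα1 hφ hγ hV₀
    (fun k l hkl => ENNReal.toReal_mono (hp_ne_top k) (hp hkl)) (fun k => ENNReal.toReal_nonneg)
    (by simp [hp1]) (ENNReal.toReal_le_of_le_ofReal (hγ0.trans hV₀) ha0)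
    (fun k => ?_) (fun k => ?_) N)
  · simpa [ENNReal.toReal_mul, hγ0] using ENNReal.toReal_mono (ha_ne_top k) (hpa k)
  · refine ENNReal.toReal_le_of_le_ofReal (by positivity) ((ha k).trans_eq ?_)
    rw [ENNReal.ofReal_add (by positivity) (by positivity), ENNReal.ofReal_mul (by linarith),
      ENNReal.ofReal_mul hφ, ENNReal.ofReal_toReal (ha_ne_top k),
      ENNReal.ofReal_toReal (hp_ne_top k)]

end DriftSequence

section Independence

variable {Ω E D : Type*} [MeasurableSpace E] [MeasurableSpace D]

theorem lintegral_comp_eq_lintegral_lintegral_map_of_indepFun {mΩ : MeasurableSpace Ω}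
    {P : Measure Ω} [IsFiniteMeasure P] {X : Ω → E} {Y : Ω → D}
    (hX : Measurable X) (hY : Measurable Y) (hXY : IndepFun X Y P) {g : E → D → ℝ≥0∞}
    (hg : Measurable (Function.uncurry g)) :
    ∫⁻ ω, g (X ω) (Y ω) ∂P = ∫⁻ ω, ∫⁻ y, g (X ω) y ∂(P.map Y) ∂P :=
  calc ∫⁻ ω, g (X ω) (Y ω) ∂P = ∫⁻ z, Function.uncurry g z ∂(P.map fun ω => (X ω, Y ω)) :=
        (lintegral_map hg (hX.prodMk hY)).symm
    _ = ∫⁻ z, Function.uncurry g z ∂((P.map X).prod (P.map Y)) := by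
        rw [hXY.map_prod_eq_prod_map_map hX.aemeasurable hY.aemeasurable]
    _ = ∫⁻ x, ∫⁻ y, g x y ∂(P.map Y) ∂(P.map X) := lintegral_prod _ hg.aemeasurable
    _ = ∫⁻ ω, ∫⁻ y, g (X ω) y ∂(P.map Y) ∂P := lintegral_map hg.lintegral_prod_right' hX

theorem setLIntegral_comp_eq_setLIntegral_lintegral_map_of_indep {F mΩ : MeasurableSpace Ω}
    {P : Measure Ω} [IsFiniteMeasure P] (hF : F ≤ mΩ) {Y : Ω → D} (hY : Measurable Y)
    (hFY : Indep F (MeasurableSpace.comap Y ‹_›) P) {X : Ω → E} (hX : Measurable[F] X)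
    {A : Set Ω} (hA : MeasurableSet[F] A) {g : E → D → ℝ≥0∞}
    (hg : Measurable (Function.uncurry g)) :
    ∫⁻ ω in A, g (X ω) (Y ω) ∂P = ∫⁻ ω in A, ∫⁻ y, g (X ω) y ∂(P.map Y) ∂P := by
  -- pair `X` with the indicator of `A`, which is also independent of `Y`
  have hXA : Measurable[F] fun ω => (X ω, A.indicator (1 : Ω → ℝ≥0∞) ω) :=
    hX.prodMk (measurable_const.indicator hA)
  have hpair := lintegral_comp_eq_lintegral_lintegral_map_of_indepFun (hXA.mono hF le_rfl) hY
    (indep_of_indep_of_le_left hFY hXA.comap_le) (g := fun z y => z.2 * g z.1 y)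
    (by fun_prop)
  have hrestrict : ∀ h : Ω → ℝ≥0∞, ∫⁻ ω in A, h ω ∂P = ∫⁻ ω, A.indicator 1 ω * h ω ∂P :=
    fun h => by
      rw [← lintegral_indicator (hF _ hA)]
      congr 1 with ω
      by_cases hω : ω ∈ A <;> simp [hω]
  rw [hrestrict, hrestrict, hpair]
  congr 1 with ω
  exact lintegral_const_mul _ (hg.comp measurable_prodMk_left)

theorem setLIntegral_comp_le_of_drift {F mΩ : MeasurableSpace Ω} {P : Measure Ω}
    [IsFiniteMeasure P] {μ : Measure D}
    (hF : F ≤ mΩ) {Y : Ω → D} (hY : Measurable Y)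
    (hFY : Indep F (MeasurableSpace.comap Y ‹_›) P) (hYμ : P.map Y = μ) {X : Ω → E}
    (hX : Measurable[F] X) {A : Set Ω} (hA : MeasurableSet[F] A) {f : E → D → E}
    (hf : Measurable (Function.uncurry f)) {W : E → ℝ≥0∞} (hW : Measurable W) {c b : ℝ≥0∞}
    (hdrift : ∀ z, ∫⁻ u, W (f z u) ∂μ ≤ c * W z + b) :
    ∫⁻ ω in A, W (f (X ω) (Y ω)) ∂P ≤ c * ∫⁻ ω in A, W (X ω) ∂P + b * P A := by
  rw [setLIntegral_comp_eq_setLIntegral_lintegral_map_of_indep hF hY hFY hX hA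
    (g := fun z u => W (f z u)) (hW.comp hf), hYμ]
  calc _ ≤ ∫⁻ ω in A, (c * W (X ω) + b) ∂P := lintegral_mono fun ω => hdrift _
    _ = c * ∫⁻ ω in A, W (X ω) ∂P + b * P A := by
        rw [lintegral_add_right _ measurable_const,
          lintegral_const_mul (f := fun ω => W (X ω)) _ (hW.comp (hX.mono hF le_rfl)),
          setLIntegral_const]

end Independence

section Trajectory

variable {Ω E D : Type*} [MeasurableSpace E] [MeasurableSpace D]

abbrev noisePast (d : ℕ → Ω → D) (k : ℕ) : MeasurableSpace Ω :=
  ⨆ i < k, MeasurableSpace.comap (d i) inferInstance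

theorem noisePast_le {mΩ : MeasurableSpace Ω} {d : ℕ → Ω → D} (hd : ∀ k, Measurable (d k))
    (k : ℕ) : noisePast d k ≤ mΩ :=
  iSup₂_le fun i _ => (hd i).comap_le

theorem indep_noisePast {mΩ : MeasurableSpace Ω} {P : Measure Ω} {d : ℕ → Ω → D}
    (hd : ∀ k, Measurable (d k)) (hindep : iIndepFun d P) (k : ℕ) :
    Indep (noisePast d k) (MeasurableSpace.comap (d k) ‹_›) P := by
  have h := indep_iSup_of_disjoint (fun i => (hd i).comap_le)
    ((iIndepFun_iff_iIndep _ _ _).1 hindep) (S := Iio k) (T := {k}) (by simp)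
  rwa [iSup_singleton] at h

theorem measurable_noisePast_of_le {f : E → D → E} {d : ℕ → Ω → D}
    {x : ℕ → Ω → E} {x₀ : E} (hf : Measurable (Function.uncurry f))
    (hx0 : ∀ ω, x 0 ω = x₀) (hxstep : ∀ k ω, x (k + 1) ω = f (x k ω) (d k ω)) {j k : ℕ}
    (hjk : j ≤ k) : Measurable[noisePast d k] (x j) := by
  induction j with
  | zero => simp only [funext hx0]; exact measurable_const
  | succ j ih =>
    rw [funext (hxstep j)]
    exact hf.comp ((ih (Nat.le_of_succ_le hjk)).prodMk
      (measurable_iff_comap_le.2 (le_iSup₂ (f := fun i _ => MeasurableSpace.comap (d i) _) j hjk)))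

end Trajectory

/-- The event `{τ_S > k}`. -/
def notHitUntil {Ω E : Type*} (x : ℕ → Ω → E) (S : Set E) (k : ℕ) : Set Ω :=
  {ω | ∀ j ≤ k, x j ω ∉ S}

section HittingEvents

variable {Ω E : Type*} {x : ℕ → Ω → E} {S : Set E}

theorem notHitUntil_antitone : Antitone (notHitUntil x S) :=
  fun _ _ hkl _ hω j hj => hω j (hj.trans hkl)

theorem notHitUntil_zero_eq_univ {x₀ : E} (hx0 : ∀ ω, x 0 ω = x₀) (hx₀ : x₀ ∉ S) :
    notHitUntil x S 0 = univ :=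
  eq_univ_of_forall fun ω j hj => by rwa [Nat.le_zero.1 hj, hx0]

theorem measurableSet_notHitUntil [MeasurableSpace E] {F : MeasurableSpace Ω}
    (hS : MeasurableSet S) {k : ℕ} (hx : ∀ j ≤ k, Measurable[F] (x j)) : MeasurableSet[F] (notHitUntil x S k) := by
  simp only [notHitUntil, ofPred_forall]
  exact MeasurableSet.iInter fun j => MeasurableSet.iInter fun hj => (hx j hj hS).compl

open Finset in
theorem iInf_natCast_le_tsum_indicator_notHitUntil (ω : Ω) :
    ⨅ (k : ℕ) (_ : x k ω ∈ S), (k : ℝ≥0∞) ≤ ∑' k, (notHitUntil x S k).indicator 1 ω := by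
  classical
  by_cases h : ∃ k, x k ω ∈ S
  · calc ⨅ (k : ℕ) (_ : x k ω ∈ S), (k : ℝ≥0∞) ≤ Nat.find h :=
          iInf₂_le (Nat.find h) (Nat.find_spec h)
      _ = ∑ k ∈ range (Nat.find h), (notHitUntil x S k).indicator 1 ω := by
          rw [sum_congr rfl fun k hk => indicator_of_mem (s := notHitUntil x S k)
            (fun j hj => Nat.find_min h (hj.trans_lt (mem_range.1 hk))) _]
          simp
      _ ≤ ∑' k, (notHitUntil x S k).indicator 1 ω := ENNReal.sum_le_tsum _
  · simp only [not_exists] at h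
    simp [notHitUntil, h]

theorem lintegral_iInf_natCast_le_tsum_measure_notHitUntil {mΩ : MeasurableSpace Ω}
    {P : Measure Ω} (hA : ∀ k, MeasurableSet (notHitUntil x S k)) :
    ∫⁻ ω, ⨅ (k : ℕ) (_ : x k ω ∈ S), (k : ℝ≥0∞) ∂P ≤ ∑' k, P (notHitUntil x S k) :=
  calc _ ≤ ∫⁻ ω, ∑' k, (notHitUntil x S k).indicator 1 ω ∂P :=
        lintegral_mono iInf_natCast_le_tsum_indicator_notHitUntil
    _ = ∑' k, P (notHitUntil x S k) := by
        rw [lintegral_tsum fun k => (measurable_one.indicator (hA k)).aemeasurable]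
        simp only [lintegral_indicator_one (hA _)]

theorem measure_exists_mem_eq_one_of_tsum_ne_top [MeasurableSpace E] {mΩ : MeasurableSpace Ω}
    {P : Measure Ω} [IsProbabilityMeasure P] (hx : ∀ k, Measurable (x k)) (hS : MeasurableSet S)
    (h : ∑' k, P (notHitUntil x S k) ≠ ∞) : P {ω | ∃ k, x k ω ∈ S} = 1 := by
  rw [← measure_univ (μ := P), ← ae_mem_iff_measure_eq
    (show MeasurableSet {ω | ∃ k, x k ω ∈ S} by
      rw [ofPred_exists]; exact MeasurableSet.iUnion fun k => hx k hS).nullMeasurableSet]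
  filter_upwards [ae_eventually_notMem h] with ω hω
  obtain ⟨k, hk⟩ := hω.exists
  simp only [notHitUntil, mem_ofPred_eq, not_forall, not_not] at hk
  obtain ⟨j, -, hj⟩ := hk
  exact ⟨j, hj⟩

end HittingEvents

theorem tsum_measure_notHitUntil_le {Ω E D : Type*} [MeasurableSpace E] [MeasurableSpace D]
    {mΩ : MeasurableSpace Ω} {P : Measure Ω} [IsProbabilityMeasure P] {μ : Measure D}
    {f : E → D → E} {d : ℕ → Ω → D} {x : ℕ → Ω → E} {x₀ : E}
    (hf : Measurable (Function.uncurry f)) (hd : ∀ k, Measurable (d k)) (hindep : iIndepFun d P)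
    (hdist : ∀ k, P.map (d k) = μ) (hx0 : ∀ ω, x 0 ω = x₀)
    (hxstep : ∀ k ω, x (k + 1) ω = f (x k ω) (d k ω)) {V : E → ℝ} (hV : Measurable V)
    {α φ γ : ℝ} (hα0 : 0 < α) (hα1 : α ≤ 1) (hφ : 0 ≤ φ) (hγ : φ / α < γ) (hx₀ : γ < V x₀)
    (hdrift : ∀ z, ∫⁻ u, ENNReal.ofReal (V (f z u)) ∂μ ≤
      ENNReal.ofReal (1 - α) * ENNReal.ofReal (V z) + ENNReal.ofReal φ) :
    ∑' k, P (notHitUntil x {z | V z ≤ γ} k) ≤ ENNReal.ofReal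
      (γ / (α * γ - φ) + (1 / α) * Real.log ((α * V x₀ - φ) / (α * γ - φ))) := by
  set A := notHitUntil x {z | V z ≤ γ}
  have hxF : ∀ {j k}, j ≤ k → Measurable[noisePast d k] (x j) :=
    measurable_noisePast_of_le hf hx0 hxstep
  have hAF : ∀ k, MeasurableSet[noisePast d k] (A k) := fun k =>
    measurableSet_notHitUntil (measurableSet_le hV measurable_const) fun _ hj => hxF hj
  have hA0 : A 0 = univ := notHitUntil_zero_eq_univ hx0 (not_le.2 hx₀)
  have hVx : ∀ k, Measurable fun ω => ENNReal.ofReal (V (x k ω)) := fun k =>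
    ENNReal.measurable_ofReal.comp (hV.comp ((hxF le_rfl).mono (noisePast_le hd k) le_rfl))
  refine tsum_le_of_drift (a := fun k => ∫⁻ ω in A k, ENNReal.ofReal (V (x k ω)) ∂P)
    hα0 hα1 hφ hγ hx₀.le (fun k l hkl => measure_mono (notHitUntil_antitone hkl))
    (by rw [hA0, measure_univ]) (by simp [hA0, hx0]) (fun k => ?_) (fun k => ?_)
  · rw [← setLIntegral_const]
    exact setLIntegral_mono (hVx k) fun ω hω => ENNReal.ofReal_le_ofReal (not_le.1 (hω k le_rfl)).le
  · calc _ ≤ ∫⁻ ω in A k, ENNReal.ofReal (V (x (k + 1) ω)) ∂P :=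
          lintegral_mono_set (notHitUntil_antitone k.le_succ)
      _ = ∫⁻ ω in A k, ENNReal.ofReal (V (f (x k ω) (d k ω))) ∂P := by simp_rw [hxstep]
      _ ≤ _ := setLIntegral_comp_le_of_drift (noisePast_le hd k) (hd k)
          (indep_noisePast hd hindep k) (hdist k) (hxF le_rfl) (hAF k) hf
          (ENNReal.measurable_ofReal.comp hV) hdrift

theorem eissp_drift_hitting_time_general {n m : ℕ}
    (f : EuclideanSpace ℝ (Fin n) → EuclideanSpace ℝ (Fin m) → EuclideanSpace ℝ (Fin n))
    (hf : Continuous (Function.uncurry f))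
    (μ : Measure (EuclideanSpace ℝ (Fin m)))
    (V : EuclideanSpace ℝ (Fin n) → ℝ) (hVmeas : Measurable V) (hVnonneg : ∀ x, 0 ≤ V x)
    (α φ : ℝ) (hα : α ∈ Set.Ioo (0 : ℝ) 1) (hφ : 0 ≤ φ)
    (hVint : ∀ x, Integrable (fun v => V (f x v)) μ)
    (hdrift : ∀ x, (∫ v, V (f x v) ∂μ) - V x ≤ -(α * V x) + φ)
    (γ : ℝ) (hγ : φ / α < γ)
    {Ω : Type*} {mΩ : MeasurableSpace Ω} (P : Measure Ω) [IsProbabilityMeasure P]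
    (d : ℕ → Ω → EuclideanSpace ℝ (Fin m)) (hdmeas : ∀ k, Measurable (d k))
    (hindep : iIndepFun d P)
    (hdist : ∀ k, Measure.map (d k) P = μ)
    (x₀ : EuclideanSpace ℝ (Fin n)) (hx₀ : γ < V x₀)
    (x : ℕ → Ω → EuclideanSpace ℝ (Fin n))
    (hx0 : ∀ ω, x 0 ω = x₀)
    (hxstep : ∀ k ω, x (k + 1) ω = f (x k ω) (d k ω)) :
    (∫⁻ ω, ⨅ (k : ℕ) (_ : V (x k ω) ≤ γ), (k : ENNReal) ∂P) ≤
      ENNReal.ofReal (γ / (α * γ - φ) +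
        (1 / α) * Real.log ((α * V x₀ - φ) / (α * γ - φ))) ∧
    P {ω | ∃ k : ℕ, V (x k ω) ≤ γ} = 1 := by
  obtain ⟨hα0, hα1⟩ := hα
  have hx : ∀ k, Measurable (x k) := fun k =>
    (measurable_noisePast_of_le hf.measurable hx0 hxstep le_rfl).mono (noisePast_le hdmeas k) le_rfl
  have hS : MeasurableSet {z | V z ≤ γ} := measurableSet_le hVmeas measurable_const
  have hdriftE : ∀ z, ∫⁻ u, ENNReal.ofReal (V (f z u)) ∂μ ≤
      ENNReal.ofReal (1 - α) * ENNReal.ofReal (V z) + ENNReal.ofReal φ := fun z => by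
    rw [← ofReal_integral_eq_lintegral_ofReal (hVint z) (ae_of_all _ fun _ => hVnonneg _),
      ← ENNReal.ofReal_mul (by linarith), ← ENNReal.ofReal_add (by nlinarith [hVnonneg z]) hφ]
    exact ENNReal.ofReal_le_ofReal (by linarith [hdrift z])
  have hsum := tsum_measure_notHitUntil_le hf.measurable hdmeas hindep hdist hx0 hxstep hVmeas
    hα0 hα1.le hφ hγ hx₀ hdriftE
  exact ⟨(lintegral_iInf_natCast_le_tsum_measure_notHitUntil
      fun k => measurableSet_notHitUntil hS fun j _ => hx j).trans hsum,
    measure_exists_mem_eq_one_of_tsum_ne_top hx hS (ne_top_of_le_ne_top ENNReal.ofReal_ne_top hsum)⟩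

/-- **Quantitative hitting-time bound for the E-ISSp drift.** For `x_{k+1} = f(x_k,d_k)` with
`d_k` i.i.d. from `μ`, suppose `V : ℝⁿ → ℝ_{≥0}` satisfies
`E_d[V(f(x,d))] - V(x) ≤ -α V(x) + φ` for all `x`, with `α ∈ (0,1)`, `φ ≥ 0`.  Then for any
`γ > φ/α` and initial state with `V(x₀) > γ`, the hitting time
`τ_γ = inf{k : V(x_k) ≤ γ}` satisfies
`E[τ_γ] ≤ γ/(αγ - φ) + (1/α) log((α V(x₀) - φ)/(αγ - φ))`, and hence `P{τ_γ < ∞} = 1`. -/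
theorem eissp_drift_hitting_time {n m : ℕ}
    (f : EuclideanSpace ℝ (Fin n) → EuclideanSpace ℝ (Fin m) → EuclideanSpace ℝ (Fin n))
    (hf : Continuous (Function.uncurry f))
    (μ : Measure (EuclideanSpace ℝ (Fin m))) [IsProbabilityMeasure μ]
    (V : EuclideanSpace ℝ (Fin n) → ℝ) (hVmeas : Measurable V) (hVnonneg : ∀ x, 0 ≤ V x)
    (α φ : ℝ) (hα : α ∈ Set.Ioo (0 : ℝ) 1) (hφ : 0 ≤ φ)
    (hVint : ∀ x, Integrable (fun v => V (f x v)) μ)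
    (hdrift : ∀ x, (∫ v, V (f x v) ∂μ) - V x ≤ -(α * V x) + φ)
    (γ : ℝ) (hγ : φ / α < γ)
    {Ω : Type*} {mΩ : MeasurableSpace Ω} (P : Measure Ω) [IsProbabilityMeasure P]
    (d : ℕ → Ω → EuclideanSpace ℝ (Fin m)) (hdmeas : ∀ k, Measurable (d k))
    (hindep : iIndepFun d P)
    (hdist : ∀ k, Measure.map (d k) P = μ)
    (x₀ : EuclideanSpace ℝ (Fin n)) (hx₀ : γ < V x₀)
    (x : ℕ → Ω → EuclideanSpace ℝ (Fin n))
    (hx0 : ∀ ω, x 0 ω = x₀)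
    (hxstep : ∀ k ω, x (k + 1) ω = f (x k ω) (d k ω)) :
    (∫⁻ ω, ⨅ (k : ℕ) (_ : V (x k ω) ≤ γ), (k : ENNReal) ∂P) ≤
      ENNReal.ofReal (γ / (α * γ - φ) +
        (1 / α) * Real.log ((α * V x₀ - φ) / (α * γ - φ))) ∧
    P {ω | ∃ k : ℕ, V (x k ω) ≤ γ} = 1 :=
  eissp_drift_hitting_time_general f hf μ V hVmeas hVnonneg α φ hα hφ hVint hdrift γ hγ (mΩ := mΩ) P
    d hdmeas hindep hdist x₀ hx₀ x hx0 hxstep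
end

section
/- Let A, B be real matrices with A ∈ ℝ^{n×n}, B ∈ ℝ^{n×m}, let P, Q ∈ ℝ^{n×n} be symmetric positive definite, let K ∈ ℝ^{m×n}, and set A_cl = A − BK. Suppose the closed-loop Lyapunov inequality A_clᵀ P A_cl − P ≼ −Q holds (in the positive-semidefinite order). Let d be a random vector in ℝⁿ with E[d] = 0 and E[‖d‖²] < ∞, and define V(x) = xᵀ P x. Then for every x ∈ ℝⁿ, E[V(A_cl x + d)] − V(x) ≤ −α V(x) + σ E[‖d‖²], where α = λ_min(Q)/λ_max(P) and σ = λ_max(P). -/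
/-!
Expanding `V(A_cl x + d)` and using `E[d] = 0` removes the cross term, so
`E[V(A_cl x + d)] = V(A_cl x) + E[dᵀ P d]`. The Lyapunov inequality gives
`V(A_cl x) ≤ V(x) - xᵀ Q x`, and the Rayleigh bounds `λ_min(Q) ‖x‖² ≤ xᵀ Q x` and
`vᵀ P v ≤ λ_max(P) ‖v‖²` turn `-xᵀ Q x` into `-α V(x)` and `E[dᵀ P d]` into `σ E[‖d‖²]`.
The Rayleigh bounds come from comparing `M` with `c • 1` in the Loewner order through the
spectrum of `M`.
-/

open MeasureTheory Matrix
open scoped MatrixOrder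

namespace Matrix

variable {n : Type*} [Fintype n]

theorem dotProduct_mulVec_transpose_mul_mul (A M : Matrix n n ℝ) (x : n → ℝ) :
    x ⬝ᵥ ((Aᵀ * M * A) *ᵥ x) = (A *ᵥ x) ⬝ᵥ (M *ᵥ (A *ᵥ x)) := by
  rw [← mulVec_mulVec, ← mulVec_mulVec, dotProduct_mulVec, vecMul_transpose]

theorem add_dotProduct_mulVec_add (M : Matrix n n ℝ) (y v : n → ℝ) :
    (y + v) ⬝ᵥ (M *ᵥ (y + v)) = y ⬝ᵥ (M *ᵥ y) + (y ᵥ* M + M *ᵥ y) ⬝ᵥ v + v ⬝ᵥ (M *ᵥ v) := by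
  simp only [mulVec_add, dotProduct_add, add_dotProduct, ← dotProduct_mulVec,
    dotProduct_comm v (M *ᵥ y)]
  ring

namespace IsHermitian

variable [DecidableEq n] {M : Matrix n n ℝ} (hM : M.IsHermitian)
include hM

theorem dotProduct_mulVec_le {c : ℝ} (h : ∀ i, hM.eigenvalues i ≤ c) (x : n → ℝ) :
    x ⬝ᵥ (M *ᵥ x) ≤ c * (x ⬝ᵥ x) := by
  have hle : M ≤ algebraMap ℝ _ c := le_algebraMap_of_spectrum_le (by
    rw [hM.spectrum_real_eq_range_eigenvalues]
    rintro _ ⟨i, rfl⟩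
    exact h i) hM
  simpa [Algebra.algebraMap_eq_smul_one, sub_mulVec, dotProduct_sub, smul_mulVec,
    dotProduct_smul] using (le_iff.mp hle).dotProduct_mulVec_nonneg x

theorem le_dotProduct_mulVec {c : ℝ} (h : ∀ i, c ≤ hM.eigenvalues i) (x : n → ℝ) :
    c * (x ⬝ᵥ x) ≤ x ⬝ᵥ (M *ᵥ x) := by
  have hle : algebraMap ℝ _ c ≤ M := algebraMap_le_of_le_spectrum (by
    rw [hM.spectrum_real_eq_range_eigenvalues]
    rintro _ ⟨i, rfl⟩
    exact h i) hM
  simpa [Algebra.algebraMap_eq_smul_one, sub_mulVec, dotProduct_sub, smul_mulVec,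
    dotProduct_smul] using (le_iff.mp hle).dotProduct_mulVec_nonneg x

theorem dotProduct_mulVec_le_iSup_eigenvalues (x : n → ℝ) :
    x ⬝ᵥ (M *ᵥ x) ≤ (⨆ i, hM.eigenvalues i) * (x ⬝ᵥ x) :=
  hM.dotProduct_mulVec_le (le_ciSup (Set.finite_range _).bddAbove) x

theorem iInf_eigenvalues_mul_le_dotProduct_mulVec (x : n → ℝ) :
    (⨅ i, hM.eigenvalues i) * (x ⬝ᵥ x) ≤ x ⬝ᵥ (M *ᵥ x) :=
  hM.le_dotProduct_mulVec (ciInf_le (Set.finite_range _).bddBelow) x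

end IsHermitian

theorem PosSemidef.div_iSup_eigenvalues_mul_le [DecidableEq n] {M : Matrix n n ℝ}
    (hM : M.PosSemidef) {c : ℝ} (hc : 0 ≤ c) (x : n → ℝ) :
    c / (⨆ i, hM.1.eigenvalues i) * (x ⬝ᵥ (M *ᵥ x)) ≤ c * (x ⬝ᵥ x) := by
  set lam := ⨆ i, hM.1.eigenvalues i
  have hlam : 0 ≤ lam := Real.iSup_nonneg hM.eigenvalues_nonneg
  calc c / lam * (x ⬝ᵥ (M *ᵥ x)) ≤ c / lam * (lam * (x ⬝ᵥ x)) := by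
        gcongr
        exact hM.1.dotProduct_mulVec_le_iSup_eigenvalues x
    _ = c * (lam / lam) * (x ⬝ᵥ x) := by ring
    -- `lam / lam ≤ 1` also covers an empty index type, where `lam = 0`.
    _ ≤ c * (x ⬝ᵥ x) := by
        gcongr
        · exact dotProduct_self_star_nonneg x
        · exact mul_le_of_le_one_right hc (div_self_le_one lam)

section Integral

variable {Ω : Type*} [MeasurableSpace Ω] {μ : Measure Ω} {d : Ω → n → ℝ}

theorem integral_dotProduct (w : n → ℝ) (hd : Integrable d μ) :
    ∫ ω, w ⬝ᵥ d ω ∂μ = w ⬝ᵥ ∫ ω, d ω ∂μ :=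
  (LinearMap.toContinuousLinearMap (dotProductBilin ℝ ℝ w)).integral_comp_comm hd

theorem PosSemidef.integrable_dotProduct_mulVec [DecidableEq n] {M : Matrix n n ℝ}
    (hM : M.PosSemidef) (hd : AEStronglyMeasurable d μ)
    (hsq : Integrable (fun ω => d ω ⬝ᵥ d ω) μ) :
    Integrable (fun ω => d ω ⬝ᵥ (M *ᵥ d ω)) μ := by
  refine (hsq.const_mul (⨆ i, hM.1.eigenvalues i)).mono' ?_ (ae_of_all _ fun ω => ?_)
  · exact (by fun_prop : Continuous fun v : n → ℝ => v ⬝ᵥ (M *ᵥ v)).comp_aestronglyMeasurable hd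
  · rw [Real.norm_of_nonneg (by simpa using hM.dotProduct_mulVec_nonneg (d ω))]
    exact hM.1.dotProduct_mulVec_le_iSup_eigenvalues (d ω)

theorem integral_add_dotProduct_mulVec_add [IsProbabilityMeasure μ] (M : Matrix n n ℝ)
    (y : n → ℝ) (hd : Integrable d μ) (hmean : ∫ ω, d ω ∂μ = 0)
    (hq : Integrable (fun ω => d ω ⬝ᵥ (M *ᵥ d ω)) μ) :
    ∫ ω, (y + d ω) ⬝ᵥ (M *ᵥ (y + d ω)) ∂μ = y ⬝ᵥ (M *ᵥ y) + ∫ ω, d ω ⬝ᵥ (M *ᵥ d ω) ∂μ := by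
  have hlin : Integrable (fun ω => (y ᵥ* M + M *ᵥ y) ⬝ᵥ d ω) μ :=
    (LinearMap.toContinuousLinearMap (dotProductBilin ℝ ℝ (y ᵥ* M + M *ᵥ y))).integrable_comp hd
  simp only [add_dotProduct_mulVec_add]
  rw [integral_add ((integrable_const _).fun_add hlin) hq, integral_add (integrable_const _) hlin,
    integral_dotProduct _ hd, hmean]
  simp

end Integral

end Matrix

theorem lqr_lyapunov_is_eissp_general {n m : ℕ}
    (A : Matrix (Fin n) (Fin n) ℝ) (B : Matrix (Fin n) (Fin m) ℝ)
    (Pm Qm : Matrix (Fin n) (Fin n) ℝ) (K : Matrix (Fin m) (Fin n) ℝ)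
    (hP : Pm.PosDef) (hQ : Qm.PosDef)
    (hLyap : (Pm - (A - B * K)ᵀ * Pm * (A - B * K) - Qm).PosSemidef)
    {Ω : Type*} {mΩ : MeasurableSpace Ω} (Pr : Measure Ω) [IsProbabilityMeasure Pr]
    (d : Ω → (Fin n → ℝ))
    (hd1 : Integrable d Pr) (hmean : (∫ ω, d ω ∂Pr) = 0)
    (hmom : Integrable (fun ω => ∑ i, d ω i ^ 2) Pr) :
    ∀ x : Fin n → ℝ,
      (∫ ω, ((A - B * K) *ᵥ x + d ω) ⬝ᵥ (Pm *ᵥ ((A - B * K) *ᵥ x + d ω)) ∂Pr)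
          - x ⬝ᵥ (Pm *ᵥ x) ≤
        -(((⨅ i, hQ.1.eigenvalues i) / (⨆ i, hP.1.eigenvalues i)) * (x ⬝ᵥ (Pm *ᵥ x))) +
          (⨆ i, hP.1.eigenvalues i) * ∫ ω, ∑ i, d ω i ^ 2 ∂Pr := by
  intro x
  have hsq : ∀ v : Fin n → ℝ, v ⬝ᵥ v = ∑ i, v i ^ 2 := fun v => by simp [dotProduct, sq]
  have hquad : Integrable (fun ω => d ω ⬝ᵥ (Pm *ᵥ d ω)) Pr :=
    hP.posSemidef.integrable_dotProduct_mulVec hd1.1 (by simpa only [hsq] using hmom)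
  have hdecay : ((A - B * K) *ᵥ x) ⬝ᵥ (Pm *ᵥ ((A - B * K) *ᵥ x)) ≤
      x ⬝ᵥ (Pm *ᵥ x) - x ⬝ᵥ (Qm *ᵥ x) := by
    have := hLyap.dotProduct_mulVec_nonneg x
    rw [star_trivial, sub_mulVec, sub_mulVec, dotProduct_sub, dotProduct_sub,
      dotProduct_mulVec_transpose_mul_mul] at this
    linarith
  have hrate : (⨅ i, hQ.1.eigenvalues i) / (⨆ i, hP.1.eigenvalues i) * (x ⬝ᵥ (Pm *ᵥ x)) ≤
      x ⬝ᵥ (Qm *ᵥ x) :=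
    (hP.posSemidef.div_iSup_eigenvalues_mul_le
      (Real.iInf_nonneg fun i => (hQ.eigenvalues_pos i).le) x).trans
      (hQ.1.iInf_eigenvalues_mul_le_dotProduct_mulVec x)
  have hnoise : ∫ ω, d ω ⬝ᵥ (Pm *ᵥ d ω) ∂Pr ≤
      (⨆ i, hP.1.eigenvalues i) * ∫ ω, ∑ i, d ω i ^ 2 ∂Pr := by
    rw [← integral_const_mul]
    refine integral_mono hquad (hmom.const_mul _) fun ω => ?_
    simpa only [hsq] using hP.1.dotProduct_mulVec_le_iSup_eigenvalues (d ω)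
  rw [integral_add_dotProduct_mulVec_add Pm _ hd1 hmean hquad]
  linarith

/-- **LQR Lyapunov function is an E-ISSp Lyapunov function for the closed loop (LQG
example).** Let `A_cl = A - B K` and suppose the symmetric positive definite `P, Q` satisfy
the closed-loop Lyapunov inequality `A_clᵀ P A_cl - P ≼ -Q`.  Let `d` be a zero-mean random
vector with finite second moment, and let `V(x) = xᵀ P x`.  Then for every `x`,
`E[V(A_cl x + d)] - V(x) ≤ -α V(x) + σ E[‖d‖²]`, with `α = λ_min(Q)/λ_max(P)` and
`σ = λ_max(P)` (here `E[‖d‖²] = E[∑ i, d_i²]` is the Euclidean second moment). -/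
theorem lqr_lyapunov_is_eissp {n m : ℕ}
    (A : Matrix (Fin n) (Fin n) ℝ) (B : Matrix (Fin n) (Fin m) ℝ)
    (Pm Qm : Matrix (Fin n) (Fin n) ℝ) (K : Matrix (Fin m) (Fin n) ℝ)
    (hP : Pm.PosDef) (hQ : Qm.PosDef)
    (hLyap : (Pm - (A - B * K)ᵀ * Pm * (A - B * K) - Qm).PosSemidef)
    {Ω : Type*} {mΩ : MeasurableSpace Ω} (Pr : Measure Ω) [IsProbabilityMeasure Pr]
    (d : Ω → (Fin n → ℝ)) (hdmeas : Measurable d)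
    (hd1 : Integrable d Pr) (hmean : (∫ ω, d ω ∂Pr) = 0)
    (hmom : Integrable (fun ω => ∑ i, d ω i ^ 2) Pr) :
    ∀ x : Fin n → ℝ,
      (∫ ω, ((A - B * K) *ᵥ x + d ω) ⬝ᵥ (Pm *ᵥ ((A - B * K) *ᵥ x + d ω)) ∂Pr)
          - x ⬝ᵥ (Pm *ᵥ x) ≤
        -(((⨅ i, hQ.1.eigenvalues i) / (⨆ i, hP.1.eigenvalues i)) * (x ⬝ᵥ (Pm *ᵥ x))) +
          (⨆ i, hP.1.eigenvalues i) * ∫ ω, ∑ i, d ω i ^ 2 ∂Pr :=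
  lqr_lyapunov_is_eissp_general A B Pm Qm K hP hQ hLyap (mΩ := mΩ) Pr d hd1 hmean hmom
end

section
/- Consider the discrete-time stochastic system x_{k+1} = f(x_k, d_k) with disturbances d_k drawn i.i.d. from a distribution D, and suppose V : ℝⁿ → ℝ_{≥0} satisfies E_{d∼D}[V(f(x,d))] − V(x) ≤ −α V(x) + σ̃ for all x ∈ ℝⁿ, with α ∈ (0,1) and σ̃ ≥ 0. Fix K ∈ ℕ, an initial state x₀, and a level ρ̃ > 0 with V(x₀) ≤ ρ̃ and ρ̃ ≥ σ̃/α. Then P{ V(x_k) ≤ ρ̃ for all k ≤ K } ≥ ((ρ̃ − V(x₀))/ρ̃) · ((ρ̃ − σ̃)/ρ̃)^K. -/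
open MeasureTheory ProbabilityTheory Set
open scoped ENNReal

/-!
Let `S_k` be the event `V(x_j) ≤ ρ̃` for all `j ≤ k` and `q_k = E[(ρ̃ - V(x_k)) 1_{S_k}]`.
The event `S_k` and the state `x_k` are determined by `d_0, …, d_{k-1}`, hence independent of
`d_k`; integrating out `d_k` first and using `E[(ρ̃ - V(f(y,d)))⁺] ≥ ρ̃ - (1-α) V(y) - σ̃
≥ c (ρ̃ - V(y))` with `c = (ρ̃ - σ̃)/ρ̃` (this is where `σ̃ ≤ α ρ̃` enters) gives
`q_{k+1} ≥ c q_k`, because `(ρ̃ - V(x_{k+1}))⁺` already vanishes off `S_{k+1}`.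
Hence `c^K (ρ̃ - V(x₀)) ≤ q_K ≤ ρ̃ P(S_K)`.
-/

section Past

variable {Ω β γ : Type*} {mΩ : MeasurableSpace Ω} [MeasurableSpace β] [MeasurableSpace γ]

abbrev pastMeasurableSpace (d : ℕ → Ω → γ) (k : ℕ) : MeasurableSpace Ω :=
  ⨆ i ∈ Iio k, MeasurableSpace.comap (d i) inferInstance

variable {d : ℕ → Ω → γ}

lemma pastMeasurableSpace_mono : Monotone (pastMeasurableSpace d) :=
  fun _ _ hkl => biSup_mono fun _ hi => lt_of_lt_of_le hi hkl

lemma pastMeasurableSpace_le (hd : ∀ k, Measurable (d k)) (k : ℕ) :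
    pastMeasurableSpace d k ≤ mΩ :=
  iSup₂_le fun i _ => (hd i).comap_le

lemma measurable_pastMeasurableSpace_succ (k : ℕ) :
    Measurable[pastMeasurableSpace d (k + 1)] (d k) :=
  Measurable.of_comap_le <| le_iSup₂_of_le k (Nat.lt_succ_self k) le_rfl

lemma indep_pastMeasurableSpace {P : Measure Ω} (hd : ∀ k, Measurable (d k))
    (hindep : iIndepFun d P) (k : ℕ) :
    Indep (pastMeasurableSpace d k) (MeasurableSpace.comap (d k) inferInstance) P := by
  have h := indep_iSup_of_disjoint (fun i => (hd i).comap_le) hindep.iIndep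
    (Set.disjoint_singleton_right.2 (lt_irrefl k) : Disjoint (Iio k) {k})
  rwa [iSup_singleton] at h

lemma measurable_pastMeasurableSpace_of_recursion {F : β → γ → β}
    (hF : Measurable (Function.uncurry F)) {x : ℕ → Ω → β} {x₀ : β} (hx0 : ∀ ω, x 0 ω = x₀)
    (hstep : ∀ k ω, x (k + 1) ω = F (x k ω) (d k ω)) (k : ℕ) :
    Measurable[pastMeasurableSpace d k] (x k) := by
  induction k with
  | zero => simpa only [funext hx0] using measurable_const
  | succ k ih =>
    rw [funext (hstep k)]
    exact hF.comp ((ih.mono (pastMeasurableSpace_mono k.le_succ) le_rfl).prodMk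
      (measurable_pastMeasurableSpace_succ k))

end Past

section Independence

variable {Ω β γ : Type*} {m mΩ : MeasurableSpace Ω} [MeasurableSpace β] [MeasurableSpace γ]
  {P : Measure Ω} {W : Ω → β} {D : Ω → γ} {S : Set Ω}

lemma map_restrict_prodMk_eq_prod_of_indep [IsFiniteMeasure P] (hm : m ≤ mΩ)
    (hind : Indep m (MeasurableSpace.comap D inferInstance) P) (hW : Measurable[m] W)
    (hD : Measurable D) (hS : MeasurableSet[m] S) :
    (P.restrict S).map (fun ω => (W ω, D ω)) = ((P.restrict S).map W).prod (P.map D) := by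
  have hW' : Measurable W := hW.mono hm le_rfl
  refine (Measure.prod_eq fun A B hA hB => ?_).symm
  rw [Measure.map_apply (hW'.prodMk hD) (hA.prod hB), Measure.map_apply hW' hA,
    Measure.map_apply hD hB, Measure.restrict_apply (hW'.prodMk hD (hA.prod hB)),
    Measure.restrict_apply (hW' hA), mk_preimage_prod, inter_right_comm,
    (Indep_iff _ _ P).1 hind _ _ ((hW hA).inter hS) ⟨B, hB, rfl⟩]

lemma setLIntegral_comp_prodMk_of_indep [IsFiniteMeasure P] (hm : m ≤ mΩ)
    (hind : Indep m (MeasurableSpace.comap D inferInstance) P) (hW : Measurable[m] W)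
    (hD : Measurable D) (hS : MeasurableSet[m] S) {G : β × γ → ℝ≥0∞} (hG : Measurable G) :
    ∫⁻ ω in S, G (W ω, D ω) ∂P = ∫⁻ ω in S, ∫⁻ z, G (W ω, z) ∂(P.map D) ∂P := by
  have hW' : Measurable W := hW.mono hm le_rfl
  rw [← lintegral_map hG (hW'.prodMk hD), map_restrict_prodMk_eq_prod_of_indep hm hind hW hD hS,
    lintegral_prod _ hG.aemeasurable, lintegral_map hG.lintegral_prod_right' hW']

end Independence

section OneStep

variable {γ : Type*} [MeasurableSpace γ] {μ : Measure γ} [IsProbabilityMeasure μ] {φ : γ → ℝ}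

lemma ofReal_sub_integral_le_lintegral (hφ : Integrable φ μ) (ρ : ℝ) :
    ENNReal.ofReal (ρ - ∫ z, φ z ∂μ) ≤ ∫⁻ z, ENNReal.ofReal (ρ - φ z) ∂μ := by
  have hint : Integrable (fun z => ρ - φ z) μ := (integrable_const ρ).sub hφ
  calc ENNReal.ofReal (ρ - ∫ z, φ z ∂μ)
      = ENNReal.ofReal (∫ z, (ρ - φ z) ∂μ) := by
        rw [integral_sub (integrable_const ρ) hφ, integral_const, probReal_univ, one_smul]
    _ ≤ ENNReal.ofReal (∫⁻ z, ENNReal.ofReal (ρ - φ z) ∂μ).toReal := by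
        refine ENNReal.ofReal_le_ofReal ?_
        rw [integral_eq_lintegral_pos_part_sub_lintegral_neg_part hint]
        exact sub_le_self _ ENNReal.toReal_nonneg
    _ ≤ ∫⁻ z, ENNReal.ofReal (ρ - φ z) ∂μ := ENNReal.ofReal_toReal_le

lemma ofReal_mul_sub_le_lintegral_of_drift (hφ : Integrable φ μ) {v α σ ρ : ℝ} (hv : 0 ≤ v)
    (hα : α ≤ 1) (hρ : 0 < ρ) (hσ : σ ≤ α * ρ) (hdrift : (∫ z, φ z ∂μ) - v ≤ -(α * v) + σ) :
    ENNReal.ofReal ((ρ - σ) / ρ) * ENNReal.ofReal (ρ - v) ≤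
      ∫⁻ z, ENNReal.ofReal (ρ - φ z) ∂μ := by
  have hc : 0 ≤ (ρ - σ) / ρ := div_nonneg (by nlinarith) hρ.le
  rw [← ENNReal.ofReal_mul hc]
  refine le_trans (ENNReal.ofReal_le_ofReal ?_) (ofReal_sub_integral_le_lintegral hφ ρ)
  have hσρ : σ / ρ * v ≤ α * v := mul_le_mul_of_nonneg_right ((div_le_iff₀ hρ).2 hσ) hv
  have hexpand : (ρ - σ) / ρ * (ρ - v) = ρ - v - σ + σ / ρ * v := by field_simp; ring
  linarith

end OneStep

section SafeSet

variable {Ω β : Type*} (V : β → ℝ) (ρ : ℝ) (x : ℕ → Ω → β)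

def safeSet (k : ℕ) : Set Ω := {ω | ∀ j ≤ k, V (x j ω) ≤ ρ}

noncomputable def safetyMargin (k : ℕ) : Ω → ℝ≥0∞ :=
  (safeSet V ρ x k).indicator fun ω => ENNReal.ofReal (ρ - V (x k ω))

variable {V ρ x}

lemma indicator_setOf_le_ofReal_sub (g : Ω → ℝ) :
    {ω | g ω ≤ ρ}.indicator (fun ω => ENNReal.ofReal (ρ - g ω)) =
      fun ω => ENNReal.ofReal (ρ - g ω) :=
  indicator_eq_self.2 fun ω hω => by
    simpa using (ENNReal.ofReal_pos.1 (pos_iff_ne_zero.2 hω)).le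

lemma safeSet_zero : safeSet V ρ x 0 = {ω | V (x 0 ω) ≤ ρ} := by
  simp [safeSet]

lemma safeSet_succ (k : ℕ) :
    safeSet V ρ x (k + 1) = safeSet V ρ x k ∩ {ω | V (x (k + 1) ω) ≤ ρ} := by
  ext ω
  simp [safeSet, Nat.le_succ_iff, or_imp, forall_and]

lemma safetyMargin_zero : safetyMargin V ρ x 0 = fun ω => ENNReal.ofReal (ρ - V (x 0 ω)) := by
  rw [safetyMargin, safeSet_zero, indicator_setOf_le_ofReal_sub]

lemma safetyMargin_succ (k : ℕ) :
    safetyMargin V ρ x (k + 1) =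
      (safeSet V ρ x k).indicator fun ω => ENNReal.ofReal (ρ - V (x (k + 1) ω)) := by
  rw [safetyMargin, safeSet_succ, ← indicator_indicator, indicator_setOf_le_ofReal_sub]

lemma safetyMargin_le_indicator (hV : ∀ y, 0 ≤ V y) (k : ℕ) :
    safetyMargin V ρ x k ≤ (safeSet V ρ x k).indicator fun _ => ENNReal.ofReal ρ :=
  fun _ => indicator_le_indicator (ENNReal.ofReal_le_ofReal (sub_le_self ρ (hV _)))

lemma lintegral_safetyMargin_le {mΩ : MeasurableSpace Ω} {P : Measure Ω} (hV : ∀ y, 0 ≤ V y)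
    {k : ℕ} (hS : MeasurableSet (safeSet V ρ x k)) :
    ∫⁻ ω, safetyMargin V ρ x k ω ∂P ≤ ENNReal.ofReal ρ * P (safeSet V ρ x k) :=
  (lintegral_mono (safetyMargin_le_indicator hV k)).trans_eq (lintegral_indicator_const hS _)

lemma measurableSet_safeSet [MeasurableSpace β] {m : MeasurableSpace Ω} (hV : Measurable V)
    {k : ℕ} (hx : ∀ j ≤ k, Measurable[m] (x j)) : MeasurableSet[m] (safeSet V ρ x k) := by
  simp only [safeSet, ofPred_forall]
  exact MeasurableSet.iInter fun j => MeasurableSet.iInter fun hj =>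
    hV.comp (hx j hj) measurableSet_Iic

end SafeSet

section Recursion

variable {Ω β γ : Type*} {mΩ : MeasurableSpace Ω} [MeasurableSpace β] [MeasurableSpace γ]
  {P : Measure Ω} {F : β → γ → β} {V : β → ℝ} {ρ c : ℝ} {d : ℕ → Ω → γ} {x : ℕ → Ω → β} {x₀ : β}

lemma measurableSet_safeSet_of_recursion (hF : Measurable (Function.uncurry F))
    (hV : Measurable V) (hx0 : ∀ ω, x 0 ω = x₀) (hstep : ∀ k ω, x (k + 1) ω = F (x k ω) (d k ω))
    (k : ℕ) : MeasurableSet[pastMeasurableSpace d k] (safeSet V ρ x k) :=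
  measurableSet_safeSet hV fun j hj =>
    (measurable_pastMeasurableSpace_of_recursion hF hx0 hstep j).mono
      (pastMeasurableSpace_mono hj) le_rfl

variable [IsProbabilityMeasure P]

lemma lintegral_safetyMargin_succ_ge (hF : Measurable (Function.uncurry F)) (hV : Measurable V)
    (hd : ∀ k, Measurable (d k)) (hindep : iIndepFun d P) (hx0 : ∀ ω, x 0 ω = x₀)
    (hstep : ∀ k ω, x (k + 1) ω = F (x k ω) (d k ω)) (k : ℕ)
    (hbound : ∀ y, ENNReal.ofReal c * ENNReal.ofReal (ρ - V y) ≤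
      ∫⁻ z, ENNReal.ofReal (ρ - V (F y z)) ∂(P.map (d k))) :
    ENNReal.ofReal c * ∫⁻ ω, safetyMargin V ρ x k ω ∂P ≤
      ∫⁻ ω, safetyMargin V ρ x (k + 1) ω ∂P := by
  have hle := pastMeasurableSpace_le hd k
  have hS := measurableSet_safeSet_of_recursion (ρ := ρ) hF hV hx0 hstep k
  have hG : Measurable fun p : β × γ => ENNReal.ofReal (ρ - V (F p.1 p.2)) :=
    ENNReal.measurable_ofReal.comp (measurable_const.sub (hV.comp hF))
  calc ENNReal.ofReal c * ∫⁻ ω, safetyMargin V ρ x k ω ∂P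
      = ∫⁻ ω in safeSet V ρ x k, ENNReal.ofReal c * ENNReal.ofReal (ρ - V (x k ω)) ∂P := by
        rw [safetyMargin, lintegral_indicator (hle _ hS),
          lintegral_const_mul' _ _ ENNReal.ofReal_ne_top]
    _ ≤ ∫⁻ ω in safeSet V ρ x k, ∫⁻ z, ENNReal.ofReal (ρ - V (F (x k ω) z)) ∂(P.map (d k)) ∂P :=
        lintegral_mono fun ω => hbound _
    _ = ∫⁻ ω in safeSet V ρ x k, ENNReal.ofReal (ρ - V (F (x k ω) (d k ω))) ∂P :=
        (setLIntegral_comp_prodMk_of_indep hle (indep_pastMeasurableSpace hd hindep k)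
          (measurable_pastMeasurableSpace_of_recursion hF hx0 hstep k) (hd k) hS hG).symm
    _ = ∫⁻ ω, safetyMargin V ρ x (k + 1) ω ∂P := by
        simp only [safetyMargin_succ, lintegral_indicator (hle _ hS), hstep]

lemma ofReal_pow_mul_le_lintegral_safetyMargin (hF : Measurable (Function.uncurry F))
    (hV : Measurable V) (hd : ∀ k, Measurable (d k)) (hindep : iIndepFun d P)
    (hx0 : ∀ ω, x 0 ω = x₀) (hstep : ∀ k ω, x (k + 1) ω = F (x k ω) (d k ω))
    (hbound : ∀ k y, ENNReal.ofReal c * ENNReal.ofReal (ρ - V y) ≤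
      ∫⁻ z, ENNReal.ofReal (ρ - V (F y z)) ∂(P.map (d k))) (k : ℕ) :
    ENNReal.ofReal c ^ k * ENNReal.ofReal (ρ - V x₀) ≤ ∫⁻ ω, safetyMargin V ρ x k ω ∂P := by
  induction k with
  | zero => simp [safetyMargin_zero, hx0]
  | succ k ih =>
    calc ENNReal.ofReal c ^ (k + 1) * ENNReal.ofReal (ρ - V x₀)
        = ENNReal.ofReal c * (ENNReal.ofReal c ^ k * ENNReal.ofReal (ρ - V x₀)) := by ring
      _ ≤ ENNReal.ofReal c * ∫⁻ ω, safetyMargin V ρ x k ω ∂P := by gcongr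
      _ ≤ ∫⁻ ω, safetyMargin V ρ x (k + 1) ω ∂P :=
        lintegral_safetyMargin_succ_ge hF hV hd hindep hx0 hstep k (hbound k)

end Recursion

theorem kushner_invariance_bound_general {n m : ℕ}
    (f : EuclideanSpace ℝ (Fin n) → EuclideanSpace ℝ (Fin m) → EuclideanSpace ℝ (Fin n))
    (hf : Continuous (Function.uncurry f))
    (μ : Measure (EuclideanSpace ℝ (Fin m))) [IsProbabilityMeasure μ]
    (V : EuclideanSpace ℝ (Fin n) → ℝ) (hVmeas : Measurable V) (hVnonneg : ∀ x, 0 ≤ V x)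
    (α σt : ℝ) (hα : α ∈ Set.Ioo (0 : ℝ) 1)
    (hVint : ∀ x, Integrable (fun v => V (f x v)) μ)
    (hdrift : ∀ x, (∫ v, V (f x v) ∂μ) - V x ≤ -(α * V x) + σt)
    (K : ℕ) (x₀ : EuclideanSpace ℝ (Fin n))
    (ρt : ℝ) (hρ : 0 < ρt) (hρσ : σt / α ≤ ρt)
    {Ω : Type*} {mΩ : MeasurableSpace Ω} (P : Measure Ω) [IsProbabilityMeasure P]
    (d : ℕ → Ω → EuclideanSpace ℝ (Fin m)) (hdmeas : ∀ k, Measurable (d k))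
    (hindep : iIndepFun d P)
    (hdist : ∀ k, Measure.map (d k) P = μ)
    (x : ℕ → Ω → EuclideanSpace ℝ (Fin n))
    (hx0 : ∀ ω, x 0 ω = x₀)
    (hxstep : ∀ k ω, x (k + 1) ω = f (x k ω) (d k ω)) :
    P {ω | ∀ k ≤ K, V (x k ω) ≤ ρt} ≥
      ENNReal.ofReal (((ρt - V x₀) / ρt) * ((ρt - σt) / ρt) ^ K) := by
  obtain ⟨hα0, hα1⟩ := hα
  have hσρ : σt ≤ α * ρt := by rwa [div_le_iff₀ hα0, mul_comm] at hρσ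
  have hc : 0 ≤ (ρt - σt) / ρt := div_nonneg (by nlinarith) hρ.le
  have hbound : ∀ k y, ENNReal.ofReal ((ρt - σt) / ρt) * ENNReal.ofReal (ρt - V y) ≤
      ∫⁻ z, ENNReal.ofReal (ρt - V (f y z)) ∂(P.map (d k)) := fun k y => by
    rw [hdist k]
    exact ofReal_mul_sub_le_lintegral_of_drift (hVint y) (hVnonneg y) hα1.le hρ hσρ (hdrift y)
  have hS : MeasurableSet (safeSet V ρt x K) := pastMeasurableSpace_le hdmeas K _
    (measurableSet_safeSet_of_recursion hf.measurable hVmeas hx0 hxstep K)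
  have key := (ofReal_pow_mul_le_lintegral_safetyMargin hf.measurable hVmeas hdmeas hindep hx0
    hxstep hbound K).trans (lintegral_safetyMargin_le hVnonneg hS)
  rw [ge_iff_le,
    ← ENNReal.mul_le_mul_iff_right (ENNReal.ofReal_pos.2 hρ).ne' ENNReal.ofReal_ne_top]
  refine le_of_eq_of_le ?_ key
  rw [← ENNReal.ofReal_mul hρ.le, ← ENNReal.ofReal_pow hc, ← ENNReal.ofReal_mul (pow_nonneg hc K)]
  congr 1
  field_simp

/-- **Kushner's finite-horizon invariance bound.** For `x_{k+1} = f(x_k,d_k)` with `d_k`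
i.i.d. from `μ`, suppose `V : ℝⁿ → ℝ_{≥0}` satisfies
`E_d[V(f(x,d))] - V(x) ≤ -α V(x) + σ̃` for all `x`, with `α ∈ (0,1)`, `σ̃ ≥ 0`.  Fix a
horizon `K`, an initial state `x₀`, and a level `ρ̃ > 0` with `V(x₀) ≤ ρ̃` and `ρ̃ ≥ σ̃/α`.
Then `P{V(x_k) ≤ ρ̃, ∀ k ≤ K} ≥ ((ρ̃ - V(x₀))/ρ̃) ((ρ̃ - σ̃)/ρ̃)^K`. -/
theorem kushner_invariance_bound {n m : ℕ}
    (f : EuclideanSpace ℝ (Fin n) → EuclideanSpace ℝ (Fin m) → EuclideanSpace ℝ (Fin n))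
    (hf : Continuous (Function.uncurry f))
    (μ : Measure (EuclideanSpace ℝ (Fin m))) [IsProbabilityMeasure μ]
    (V : EuclideanSpace ℝ (Fin n) → ℝ) (hVmeas : Measurable V) (hVnonneg : ∀ x, 0 ≤ V x)
    (α σt : ℝ) (hα : α ∈ Set.Ioo (0 : ℝ) 1) (hσ : 0 ≤ σt)
    (hVint : ∀ x, Integrable (fun v => V (f x v)) μ)
    (hdrift : ∀ x, (∫ v, V (f x v) ∂μ) - V x ≤ -(α * V x) + σt)
    (K : ℕ) (x₀ : EuclideanSpace ℝ (Fin n))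
    (ρt : ℝ) (hρ : 0 < ρt) (hx₀ : V x₀ ≤ ρt) (hρσ : σt / α ≤ ρt)
    {Ω : Type*} {mΩ : MeasurableSpace Ω} (P : Measure Ω) [IsProbabilityMeasure P]
    (d : ℕ → Ω → EuclideanSpace ℝ (Fin m)) (hdmeas : ∀ k, Measurable (d k))
    (hindep : iIndepFun d P)
    (hdist : ∀ k, Measure.map (d k) P = μ)
    (x : ℕ → Ω → EuclideanSpace ℝ (Fin n))
    (hx0 : ∀ ω, x 0 ω = x₀)
    (hxstep : ∀ k ω, x (k + 1) ω = f (x k ω) (d k ω)) :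
    P {ω | ∀ k ≤ K, V (x k ω) ≤ ρt} ≥
      ENNReal.ofReal (((ρt - V x₀) / ρt) * ((ρt - σt) / ρt) ^ K) :=
  kushner_invariance_bound_general f hf μ V hVmeas hVnonneg α σt hα hVint hdrift K x₀ ρt hρ hρσ
    (mΩ := mΩ) P d hdmeas hindep hdist x hx0 hxstep
end

section
/- Consider the deterministic discrete-time system x_{k+1} = f(x_k, d_k) with continuous f : ℝⁿ × ℝ^m → ℝⁿ, f(0,0) = 0. Suppose there exists a continuous V : ℝⁿ → ℝ_{≥0} and functions κ₁, κ₂, κ₃ ∈ K_∞ and κ₄ ∈ K such that κ₁(‖x‖) ≤ V(x) ≤ κ₂(‖x‖) for all x ∈ ℝⁿ and V(f(x,d)) − V(x) ≤ −κ₃(‖x‖) + κ₄(‖d‖) for all x ∈ ℝⁿ, d ∈ ℝ^m. Then the system is input-to-state stable: there exist β ∈ KL and γ ∈ K such that for every initial state x₀ and every bounded disturbance sequence (d_k), the trajectory satisfies ‖x_k‖ ≤ β(‖x₀‖, k) + γ(sup_{j∈ℕ} ‖d_j‖) for all k ∈ ℕ. -/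
open Filter Set

/-- A continuous function `γ : [0,∞) → [0,∞)` is of class `K` if it is strictly increasing
and `γ 0 = 0`. -/
def ClassK (γ : ℝ → ℝ) : Prop :=
  ContinuousOn γ (Set.Ici 0) ∧ StrictMonoOn γ (Set.Ici 0) ∧ γ 0 = 0

/-- `γ` is of class `K∞` if it is class `K` and `γ(r) → ∞` as `r → ∞`. -/
def ClassKInfty (γ : ℝ → ℝ) : Prop :=
  ClassK γ ∧ Tendsto γ atTop atTop

/-- `β : [0,∞) × [0,∞) → [0,∞)` is of class `KL` if `β(·,s)` is class `K` for each fixed `s`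
and `β(r,·)` is decreasing with `β(r,s) → 0` as `s → ∞` for each fixed `r`. -/
def ClassKL (β : ℝ → ℝ → ℝ) : Prop :=
  (∀ s, 0 ≤ s → ClassK fun r => β r s) ∧
  ∀ r, 0 ≤ r → AntitoneOn (β r) (Set.Ici 0) ∧ Tendsto (β r) atTop (nhds 0)

/-! Along a trajectory, `v k = V (x k)` obeys `v (k+1) ≤ v k - α (v k) + w` with
`α = κ₃ ∘ κ₂⁻¹ ∈ K∞` and `w = κ₄ (sup_j ‖d j‖)`. The sublevel `{v ≤ α⁻¹ (2w) + w}` is invariant,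
and above `α⁻¹ (2w)` each step loses at least `α (v k) / 2`. So as long as the trajectory has
not entered the sublevel, `v k + k α (v k) / 2 ≤ v 0`, hence
`α (v k) ≤ (2 v 0 + α (v 0)) / (1 + k)`.
Applying `κ₁⁻¹` gives `β` and `γ` in closed form. -/

open Function Topology

namespace ClassK

variable {κ μ : ℝ → ℝ}

theorem monotoneOn (hκ : ClassK κ) : MonotoneOn κ (Ici 0) :=
  hκ.2.1.monotoneOn

theorem nonneg (hκ : ClassK κ) {r : ℝ} (hr : 0 ≤ r) : 0 ≤ κ r :=
  hκ.2.2 ▸ hκ.monotoneOn self_mem_Ici hr hr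

theorem comp (hκ : ClassK κ) (hμ : ClassK μ) : ClassK (κ ∘ μ) :=
  have hmaps : MapsTo μ (Ici 0) (Ici 0) := fun _ hr => hμ.nonneg hr
  ⟨hκ.1.comp hμ.1 hmaps, hκ.2.1.comp hμ.2.1 hmaps, by simp [hμ.2.2, hκ.2.2]⟩

theorem add (hκ : ClassK κ) (hμ : ClassK μ) : ClassK fun r => κ r + μ r :=
  ⟨hκ.1.add hμ.1, fun _ ha _ hb hab => add_lt_add (hκ.2.1 ha hb hab) (hμ.2.1 ha hb hab),
    by simp [hκ.2.2, hμ.2.2]⟩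

theorem const_mul (hκ : ClassK κ) {c : ℝ} (hc : 0 < c) : ClassK fun r => c * κ r :=
  ⟨continuousOn_const.mul hκ.1, fun _ ha _ hb hab => mul_lt_mul_of_pos_left (hκ.2.1 ha hb hab) hc,
    by simp [hκ.2.2]⟩

theorem div_const (hκ : ClassK κ) {c : ℝ} (hc : 0 < c) : ClassK fun r => κ r / c :=
  ⟨hκ.1.div_const c, fun _ ha _ hb hab => div_lt_div_of_pos_right (hκ.2.1 ha hb hab) hc,
    by simp [hκ.2.2]⟩

theorem apply_max_le_add (hκ : ClassK κ) {a b : ℝ} (ha : 0 ≤ a) (hb : 0 ≤ b) :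
    κ (max a b) ≤ κ a + κ b := by
  rcases max_cases a b with ⟨h, -⟩ | ⟨h, -⟩ <;> rw [h]
  · linarith [hκ.nonneg hb]
  · linarith [hκ.nonneg ha]

end ClassK

theorem ClassKInfty.comp {κ μ : ℝ → ℝ} (hκ : ClassKInfty κ) (hμ : ClassKInfty μ) :
    ClassKInfty (κ ∘ μ) :=
  ⟨hκ.1.comp hμ.1, hκ.2.comp hμ.2⟩

theorem StrictMonoOn.continuousOn_Ici_of_image_eq {α β : Type*} [LinearOrder α]
    [TopologicalSpace α] [OrderTopology α] [LinearOrder β] [TopologicalSpace β] [OrderTopology β]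
    [DenselyOrdered β] {g : α → β} {a : α} (hg : StrictMonoOn g (Ici a))
    (himage : g '' Ici a = Ici (g a)) : ContinuousOn g (Ici a) := by
  intro x hx
  rcases (mem_Ici.1 hx).eq_or_lt with rfl | hax
  · exact hg.continuousWithinAt_right_of_image_mem_nhdsWithin self_mem_nhdsWithin
      (himage ▸ self_mem_nhdsWithin)
  · refine (hg.continuousAt_of_image_mem_nhds (Ici_mem_nhds hax) ?_).continuousWithinAt
    exact himage ▸ Ici_mem_nhds (hg self_mem_Ici hx hax)

/-- Junk outside `κ '' [0, ∞)`, which is all of `[0, ∞)` when `κ ∈ K∞`. -/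
noncomputable def kInv (κ : ℝ → ℝ) : ℝ → ℝ :=
  invFunOn κ (Ici 0)

theorem ClassK.kInv_apply {κ : ℝ → ℝ} (hκ : ClassK κ) {r : ℝ} (hr : 0 ≤ r) :
    kInv κ (κ r) = r :=
  hκ.2.1.injOn.leftInvOn_invFunOn hr

namespace ClassKInfty

variable {κ : ℝ → ℝ} {r y : ℝ}

theorem image_Ici (hκ : ClassKInfty κ) : κ '' Ici 0 = Ici 0 := by
  simpa [hκ.1.2.2] using hκ.1.1.image_Ici_of_monotoneOn hκ.1.monotoneOn hκ.2

theorem kInv_nonneg (hκ : ClassKInfty κ) (hy : 0 ≤ y) : 0 ≤ kInv κ y :=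
  invFunOn_mem (hκ.image_Ici.symm ▸ hy : y ∈ κ '' Ici 0)

theorem apply_kInv (hκ : ClassKInfty κ) (hy : 0 ≤ y) : κ (kInv κ y) = y :=
  invFunOn_eq (hκ.image_Ici.symm ▸ hy : y ∈ κ '' Ici 0)

theorem le_kInv_iff (hκ : ClassKInfty κ) (hr : 0 ≤ r) (hy : 0 ≤ y) :
    r ≤ kInv κ y ↔ κ r ≤ y := by
  conv_rhs => rw [← hκ.apply_kInv hy]
  exact (hκ.1.2.1.le_iff_le hr (hκ.kInv_nonneg hy)).symm

theorem kInv_le_iff (hκ : ClassKInfty κ) (hr : 0 ≤ r) (hy : 0 ≤ y) :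
    kInv κ y ≤ r ↔ y ≤ κ r := by
  conv_rhs => rw [← hκ.apply_kInv hy]
  exact (hκ.1.2.1.le_iff_le (hκ.kInv_nonneg hy) hr).symm

theorem inv (hκ : ClassKInfty κ) : ClassKInfty (kInv κ) := by
  have hzero : kInv κ 0 = 0 := by simpa [hκ.1.2.2] using hκ.1.kInv_apply le_rfl
  have hmono : StrictMonoOn (kInv κ) (Ici 0) := fun a ha b hb hab =>
    (hκ.1.2.1.lt_iff_lt (hκ.kInv_nonneg ha) (hκ.kInv_nonneg hb)).1
      (by rwa [hκ.apply_kInv ha, hκ.apply_kInv hb])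
  have himage : kInv κ '' Ici 0 = Ici (kInv κ 0) := by
    rw [hzero]
    conv_lhs => rw [← hκ.image_Ici]
    exact hκ.1.2.1.injOn.invFunOn_image subset_rfl
  refine ⟨⟨hmono.continuousOn_Ici_of_image_eq himage, hmono, hzero⟩, ?_⟩
  refine tendsto_atTop_atTop.2 fun b => ⟨κ (max b 0), fun y hy => ?_⟩
  have hy₀ : 0 ≤ y := (hκ.1.nonneg (le_max_right b 0)).trans hy
  exact (le_max_left b 0).trans ((hκ.le_kInv_iff (le_max_right b 0) hy₀).2 hy)

end ClassKInfty

theorem classKL_div_one_add {φ ψ : ℝ → ℝ} (hφ : ClassK φ) (hψ : ClassK ψ) :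
    ClassKL fun r s => φ (ψ r / (1 + s)) := by
  refine ⟨fun s hs => hφ.comp (hψ.div_const (by linarith)), fun r hr => ⟨?_, ?_⟩⟩
  · intro s hs t ht hst
    have hs' : (0 : ℝ) < 1 + s := by linarith [mem_Ici.1 hs]
    exact hφ.monotoneOn (div_nonneg (hψ.nonneg hr) (by linarith)) (div_nonneg (hψ.nonneg hr) hs'.le)
      (div_le_div_of_nonneg_left (hψ.nonneg hr) hs' (by linarith))
  · have hlim : Tendsto (fun s : ℝ => ψ r / (1 + s)) atTop (𝓝[≥] 0) := by
      refine tendsto_nhdsWithin_iff.2 ⟨?_, ?_⟩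
      · exact tendsto_const_nhds.div_atTop (tendsto_atTop_add_const_left _ 1 tendsto_id)
      · filter_upwards [eventually_ge_atTop 0] with s hs
        exact div_nonneg (hψ.nonneg hr) (by linarith)
    have hφ₀ := (hφ.1 0 self_mem_Ici).tendsto.comp hlim
    rwa [hφ.2.2] at hφ₀

theorem add_mul_le_of_le_sub {μ : ℝ → ℝ} (hμ : MonotoneOn μ (Ici 0))
    (hμ₀ : ∀ r, 0 ≤ r → 0 ≤ μ r) {v : ℕ → ℝ} (hv : ∀ j, 0 ≤ v j) {k : ℕ}
    (hstep : ∀ j < k, v (j + 1) ≤ v j - μ (v j)) : v k + k * μ (v k) ≤ v 0 := by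
  induction k with
  | zero => simp
  | succ k ih =>
    have hk := hstep k k.lt_succ_self
    have hμk : μ (v (k + 1)) ≤ μ (v k) :=
      hμ (hv _) (hv _) (by linarith [hμ₀ _ (hv k)])
    have := ih fun j hj => hstep j (hj.trans k.lt_succ_self)
    push_cast
    nlinarith [k.cast_nonneg (α := ℝ)]

theorem le_max_of_le_sub_add {α : ℝ → ℝ} (hα : ClassKInfty α) {w R : ℝ} (hw : 0 ≤ w)
    {v : ℕ → ℝ} (hv : ∀ k, 0 ≤ v k) (hR : v 0 ≤ R)
    (hstep : ∀ k, v (k + 1) ≤ v k - α (v k) + w) (k : ℕ) :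
    v k ≤ max (kInv α ((2 * R + α R) / (1 + k))) (kInv α (2 * w) + w) := by
  set ρ := kInv α (2 * w)
  have hdecay : ∀ j, ρ ≤ v j → v (j + 1) ≤ v j - α (v j) / 2 := fun j hj => by
    linarith [hstep j, (hα.kInv_le_iff (hv j) (by linarith)).1 hj]
  have hinvariant : ∀ j, v j ≤ ρ + w → v (j + 1) ≤ ρ + w := fun j hj => by
    rcases le_total (v j) ρ with hjρ | hρj
    · linarith [hstep j, hα.1.nonneg (hv j)]
    · linarith [hdecay j hρj, hα.1.nonneg (hv j)]
  by_cases hk : v k ≤ ρ + w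
  · exact le_max_of_le_right hk
  have habove : ∀ j ≤ k, ρ + w < v j := fun j hj => by
    by_contra! h
    exact hk (Nat.le_induction h (fun i _ => hinvariant i) k hj)
  have hsum := add_mul_le_of_le_sub (μ := fun r => α r / 2) (hα.1.div_const two_pos).monotoneOn
    (fun r hr => (hα.1.div_const two_pos).nonneg hr) hv
    fun j hj => hdecay j (by linarith [habove j hj.le])
  have hR₀ : 0 ≤ R := (hv 0).trans hR
  have hvk : v k ≤ R := by nlinarith [hα.1.nonneg (hv k), k.cast_nonneg (α := ℝ)]
  have hαk : α (v k) ≤ α R := hα.1.monotoneOn (hv k) hR₀ hvk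
  refine le_max_of_le_left ((hα.le_kInv_iff (hv k) ?_).2 ?_)
  · have := hα.1.nonneg hR₀
    positivity
  · rw [le_div_iff₀ (by positivity)]
    linarith [hv k]

theorem iss_lyapunov_implies_iss_general {n m : ℕ}
    (f : EuclideanSpace ℝ (Fin n) → EuclideanSpace ℝ (Fin m) → EuclideanSpace ℝ (Fin n))
    (V : EuclideanSpace ℝ (Fin n) → ℝ) (hVnonneg : ∀ x, 0 ≤ V x)
    (κ₁ κ₂ κ₃ κ₄ : ℝ → ℝ)
    (hκ₁ : ClassKInfty κ₁) (hκ₂ : ClassKInfty κ₂) (hκ₃ : ClassKInfty κ₃) (hκ₄ : ClassK κ₄)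
    (hsandwich : ∀ x, κ₁ ‖x‖ ≤ V x ∧ V x ≤ κ₂ ‖x‖)
    (hdrift : ∀ (x : EuclideanSpace ℝ (Fin n)) (dd : EuclideanSpace ℝ (Fin m)),
      V (f x dd) - V x ≤ -κ₃ ‖x‖ + κ₄ ‖dd‖) :
    ∃ (β : ℝ → ℝ → ℝ) (γ : ℝ → ℝ), ClassKL β ∧ ClassK γ ∧
      ∀ (x₀ : EuclideanSpace ℝ (Fin n)) (dseq : ℕ → EuclideanSpace ℝ (Fin m)),
        BddAbove (Set.range fun j => ‖dseq j‖) →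
        ∀ (x : ℕ → EuclideanSpace ℝ (Fin n)), x 0 = x₀ →
          (∀ k, x (k + 1) = f (x k) (dseq k)) →
          ∀ k : ℕ, ‖x k‖ ≤ β ‖x₀‖ k + γ (⨆ j, ‖dseq j‖) := by
  set α := κ₃ ∘ kInv κ₂
  have hα : ClassKInfty α := hκ₃.comp hκ₂.inv
  refine ⟨fun r s => kInv κ₁ (kInv α ((2 * κ₂ r + α (κ₂ r)) / (1 + s))),
    fun D => kInv κ₁ (kInv α (2 * κ₄ D) + κ₄ D),
    classKL_div_one_add (hκ₁.inv.1.comp hα.inv.1)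
      ((hκ₂.1.const_mul two_pos).add (hα.1.comp hκ₂.1)),
    hκ₁.inv.1.comp ((hα.inv.1.comp (hκ₄.const_mul two_pos)).add hκ₄), ?_⟩
  rintro x₀ d hd x rfl hx k
  set D := ⨆ j, ‖d j‖
  have hdD : ∀ j, ‖d j‖ ≤ D := le_ciSup hd
  have hD : 0 ≤ D := (norm_nonneg _).trans (hdD 0)
  have hw : 0 ≤ κ₄ D := hκ₄.nonneg hD
  have hR : 0 ≤ κ₂ ‖x 0‖ := hκ₂.1.nonneg (norm_nonneg _)
  have hstep : ∀ j, V (x (j + 1)) ≤ V (x j) - α (V (x j)) + κ₄ D := fun j => by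
    have hdecay : α (V (x j)) ≤ κ₃ ‖x j‖ :=
      hκ₃.1.monotoneOn (hκ₂.kInv_nonneg (hVnonneg _)) (norm_nonneg _)
        ((hκ₂.kInv_le_iff (norm_nonneg _) (hVnonneg _)).2 (hsandwich _).2)
    have hgain : κ₄ ‖d j‖ ≤ κ₄ D := hκ₄.monotoneOn (norm_nonneg _) hD (hdD j)
    linarith [hx j ▸ hdrift (x j) (d j)]
  have hV := le_max_of_le_sub_add hα hw (fun j => hVnonneg (x j))
    (hsandwich (x 0)).2 hstep k
  calc ‖x k‖ ≤ kInv κ₁ (V (x k)) :=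
        (hκ₁.le_kInv_iff (norm_nonneg _) (hVnonneg _)).2 (hsandwich _).1
    _ ≤ kInv κ₁ (max _ _) := hκ₁.inv.1.monotoneOn (hVnonneg _) ((hVnonneg _).trans hV) hV
    _ ≤ _ := by
      refine hκ₁.inv.1.apply_max_le_add (hα.inv.1.nonneg ?_) ?_
      · exact div_nonneg (by linarith [hα.1.nonneg hR]) (by positivity)
      · exact add_nonneg (hα.inv.1.nonneg (by linarith)) hw

/-- **Classical discrete-time ISS theorem (Jiang–Wang).** If the deterministic system
`x_{k+1} = f(x_k,d_k)` with continuous `f`, `f(0,0) = 0`, admits a continuous ISS Lyapunov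
function `V` with `κ₁(‖x‖) ≤ V(x) ≤ κ₂(‖x‖)` (`κ₁, κ₂, κ₃ ∈ K∞`, `κ₄ ∈ K`) and
`V(f(x,d)) - V(x) ≤ -κ₃(‖x‖) + κ₄(‖d‖)`, then the system is input-to-state stable: there
exist `β ∈ KL` and `γ ∈ K` such that every trajectory driven by a bounded disturbance
sequence satisfies `‖x_k‖ ≤ β(‖x₀‖, k) + γ(sup_j ‖d_j‖)` for all `k`. -/
theorem iss_lyapunov_implies_iss {n m : ℕ}
    (f : EuclideanSpace ℝ (Fin n) → EuclideanSpace ℝ (Fin m) → EuclideanSpace ℝ (Fin n))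
    (hf : Continuous (Function.uncurry f))
    (hf0 : f 0 0 = 0)
    (V : EuclideanSpace ℝ (Fin n) → ℝ) (hVcont : Continuous V) (hVnonneg : ∀ x, 0 ≤ V x)
    (κ₁ κ₂ κ₃ κ₄ : ℝ → ℝ)
    (hκ₁ : ClassKInfty κ₁) (hκ₂ : ClassKInfty κ₂) (hκ₃ : ClassKInfty κ₃) (hκ₄ : ClassK κ₄)
    (hsandwich : ∀ x, κ₁ ‖x‖ ≤ V x ∧ V x ≤ κ₂ ‖x‖)
    (hdrift : ∀ (x : EuclideanSpace ℝ (Fin n)) (dd : EuclideanSpace ℝ (Fin m)),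
      V (f x dd) - V x ≤ -κ₃ ‖x‖ + κ₄ ‖dd‖) :
    ∃ (β : ℝ → ℝ → ℝ) (γ : ℝ → ℝ), ClassKL β ∧ ClassK γ ∧
      ∀ (x₀ : EuclideanSpace ℝ (Fin n)) (dseq : ℕ → EuclideanSpace ℝ (Fin m)),
        BddAbove (Set.range fun j => ‖dseq j‖) →
        ∀ (x : ℕ → EuclideanSpace ℝ (Fin n)), x 0 = x₀ →
          (∀ k, x (k + 1) = f (x k) (dseq k)) →
          ∀ k : ℕ, ‖x k‖ ≤ β ‖x₀‖ k + γ (⨆ j, ‖dseq j‖) :=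
  iss_lyapunov_implies_iss_general f V hVnonneg κ₁ κ₂ κ₃ κ₄ hκ₁ hκ₂ hκ₃ hκ₄ hsandwich hdrift
end
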